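/- arXiv:1511.08409 — 11 statements merged into one kernel-verified Lean document; each statement's English description precedes it below -/
import Mathlib

section
/- For every x < 0, the supremum over b ∈ [0,∞) of ∫₀^b f(p)(1+xp) dp equals -x ∫₀^{-1/x} F(p) dp, and this supremum is attained at the unique maximizer b* = -1/x. -/
open MeasureTheory Filter Set

/-!
Integrating by parts against `F' = f` gives
`∫₀^b f(p)(1 + xp) dp = (1 + xb) F(b) - x ∫₀^b F`, which equals `-x ∫₀^b F` at `b = -1/x`.
The derivative in `b` of the left-hand side is `f(b)(1 + xb)`; since `f > 0` on `(0, ∞)`, it is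
positive before `-1/x` and negative after, so `-1/x` is the unique maximizer on `[0, ∞)`.
-/

theorem integral_mul_one_add_mul_eq {f F : ℝ → ℝ} (hf : Continuous f)
    (hF : ∀ b, F b = ∫ p in (0 : ℝ)..b, f p) (x b : ℝ) :
    ∫ p in (0 : ℝ)..b, f p * (1 + x * p) = (1 + x * b) * F b - x * ∫ p in (0 : ℝ)..b, F p := by
  obtain rfl : F = fun b => ∫ p in (0 : ℝ)..b, f p := funext hF
  have parts := intervalIntegral.integral_mul_deriv_eq_deriv_mul (a := 0) (b := b)
    (u' := f) (v := fun p => 1 + x * p) (v' := fun _ => x)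
    (fun t _ => (hf.integral_hasStrictDerivAt 0 t).hasDerivAt)
    (fun t _ => by simpa using ((hasDerivAt_id t).const_mul x).const_add 1)
    (hf.intervalIntegrable _ _) intervalIntegrable_const
  simp only [intervalIntegral.integral_same, zero_mul, sub_zero,
    intervalIntegral.integral_mul_const] at parts
  linarith

theorem apply_lt_apply_of_hasDerivAt_pos_of_neg {g g' : ℝ → ℝ} {a c b : ℝ}
    (hg : ∀ t, HasDerivAt g (g' t) t) (hpos : ∀ t ∈ Ioo a c, 0 < g' t)
    (hneg : ∀ t, c < t → g' t < 0) (hab : a ≤ b) (hbc : b ≠ c) : g b < g c := by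
  have hcont : Continuous g := continuous_iff_continuousAt.2 fun t => (hg t).continuousAt
  rcases hbc.lt_or_gt with hbc | hcb
  · refine strictMonoOn_of_hasDerivWithinAt_pos (convex_Icc b c) hcont.continuousOn
      (fun t _ => (hg t).hasDerivWithinAt) (fun t ht => hpos t ?_)
      (left_mem_Icc.2 hbc.le) (right_mem_Icc.2 hbc.le) hbc
    rw [interior_Icc] at ht
    exact ⟨hab.trans_lt ht.1, ht.2⟩
  · refine strictAntiOn_of_hasDerivWithinAt_neg (convex_Icc c b) hcont.continuousOn
      (fun t _ => (hg t).hasDerivWithinAt) (fun t ht => hneg t ?_)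
      (left_mem_Icc.2 hcb.le) (right_mem_Icc.2 hcb.le) hcb
    rw [interior_Icc] at ht
    exact ht.1

theorem stmt_0_general (f F : ℝ → ℝ)
    (hf_cont : Continuous f)
    (hf_pos : ∀ p : ℝ, 0 < p → 0 < f p)
    (hF : ∀ b : ℝ, F b = ∫ p in (0 : ℝ)..b, f p)
    (x : ℝ) (hx : x < 0) :
    IsGreatest ((fun b : ℝ => ∫ p in (0 : ℝ)..b, f p * (1 + x * p)) '' Set.Ici (0 : ℝ))
        (-x * ∫ p in (0 : ℝ)..(-1 / x), F p)
      ∧ (∫ p in (0 : ℝ)..(-1 / x), f p * (1 + x * p))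
          = -x * ∫ p in (0 : ℝ)..(-1 / x), F p
      ∧ ∀ b ∈ Set.Ici (0 : ℝ),
          (∫ p in (0 : ℝ)..b, f p * (1 + x * p))
              = -x * (∫ p in (0 : ℝ)..(-1 / x), F p) → b = -1 / x := by
  set g : ℝ → ℝ := fun b => ∫ p in (0 : ℝ)..b, f p * (1 + x * p)
  have hmax_pos : 0 < -1 / x := div_pos_of_neg_of_neg (by norm_num) hx
  have hxb : x * (-1 / x) = -1 := mul_div_cancel₀ _ hx.ne
  have hvalue : g (-1 / x) = -x * ∫ p in (0 : ℝ)..(-1 / x), F p := by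
    simp only [g, integral_mul_one_add_mul_eq hf_cont hF, hxb]
    ring
  have hlt : ∀ b ∈ Ici (0 : ℝ), b ≠ -1 / x → g b < g (-1 / x) := by
    intro b hb hne
    refine apply_lt_apply_of_hasDerivAt_pos_of_neg
      (fun t => (by fun_prop : Continuous fun p => f p * (1 + x * p)).integral_hasStrictDerivAt
        0 t |>.hasDerivAt) (fun t ht => ?_) (fun t ht => ?_) hb hne
    · have := mul_lt_mul_of_neg_left ht.2 hx
      exact mul_pos (hf_pos t ht.1) (by linarith)
    · have := mul_lt_mul_of_neg_left ht hx
      exact mul_neg_of_pos_of_neg (hf_pos t (hmax_pos.trans ht)) (by linarith)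
  refine ⟨⟨⟨-1 / x, hmax_pos.le, hvalue⟩, ?_⟩, hvalue, fun b hb heq => ?_⟩
  · rintro _ ⟨b, hb, rfl⟩
    rw [← hvalue]
    rcases eq_or_ne b (-1 / x) with rfl | hne
    · exact le_rfl
    · exact (hlt b hb hne).le
  · by_contra hne
    exact (hlt b hb hne).ne (heq.trans hvalue.symm)

/-- For every `x < 0`, the supremum over `b ∈ [0,∞)` of `∫₀^b f(p)(1+xp) dp` equals
`-x ∫₀^{-1/x} F(p) dp`, and this supremum is attained at the unique maximizer `b* = -1/x`. -/
theorem stmt_0 (f F : ℝ → ℝ)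
    (hf_cont : Continuous f)
    (hf_nonpos : ∀ p ≤ (0 : ℝ), f p = 0)
    (hf_pos : ∀ p : ℝ, 0 < p → 0 < f p)
    (hf_int : (∫ p in Set.Ioi (0 : ℝ), f p) = 1)
    (hf_tail : Filter.Tendsto (fun p : ℝ => p ^ 3 * f p) Filter.atTop (nhds 0))
    (hmean_int : MeasureTheory.IntegrableOn (fun p : ℝ => p * f p) (Set.Ioi 0))
    (hF : ∀ b : ℝ, F b = ∫ p in (0 : ℝ)..b, f p)
    (x : ℝ) (hx : x < 0) :
    IsGreatest ((fun b : ℝ => ∫ p in (0 : ℝ)..b, f p * (1 + x * p)) '' Set.Ici (0 : ℝ))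
        (-x * ∫ p in (0 : ℝ)..(-1 / x), F p)
      ∧ (∫ p in (0 : ℝ)..(-1 / x), f p * (1 + x * p))
          = -x * ∫ p in (0 : ℝ)..(-1 / x), F p
      ∧ ∀ b ∈ Set.Ici (0 : ℝ),
          (∫ p in (0 : ℝ)..b, f p * (1 + x * p))
              = -x * (∫ p in (0 : ℝ)..(-1 / x), F p) → b = -1 / x :=
  stmt_0_general f F hf_cont hf_pos hF x hx
end

section
/- The function H is convex on ℝ and continuously differentiable, with H'(x) = λ G(-1/x) for x < 0 and H'(x) = λ m̄ for x ≥ 0. -/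
open MeasureTheory Filter Set
open scoped Topology

/-!
Write `b = -1/x`. For `x < 0`, integrating `∫₀ᵇ F` by parts gives `H x = λ (F b + x G b)`;
differentiating, the two terms in `f b` cancel and `H' x = λ G b`. As `x → 0⁻` we have `b → ∞`,
so `H x → λ` and `H' x → λ m̄`, the value and slope of the linear piece at `0`: hence `H` is `C¹`.
Since `G` is nondecreasing on `[0, ∞)` with limit `m̄`, the derivative is monotone and `H` is
convex.
-/

theorem integral_primitive_eq_mul_sub {f : ℝ → ℝ} (hf : Continuous f) (b : ℝ) :
    ∫ p in (0 : ℝ)..b, ∫ q in (0 : ℝ)..p, f q =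
      b * (∫ p in (0 : ℝ)..b, f p) - ∫ p in (0 : ℝ)..b, p * f p := by
  have h := intervalIntegral.integral_mul_deriv_eq_deriv_mul (fun x _ ↦ hasDerivAt_id x)
    (fun x _ ↦ (hf.integral_hasStrictDerivAt 0 x).hasDerivAt) intervalIntegrable_const
    (hf.intervalIntegrable 0 b)
  simp only [id, one_mul, intervalIntegral.integral_same, mul_zero, sub_zero] at h
  linarith

theorem monotoneOn_integral_of_nonneg {g : ℝ → ℝ} (hg : Continuous g) (hnn : ∀ p > 0, 0 ≤ g p) :
    MonotoneOn (fun b ↦ ∫ p in (0 : ℝ)..b, g p) (Ici 0) := fun a (ha : 0 ≤ a) b _ hab ↦ by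
  refine intervalIntegral.integral_mono_interval le_rfl ha hab ?_ (hg.intervalIntegrable 0 b)
  filter_upwards [ae_restrict_mem measurableSet_Ioc] with p hp
  exact hnn p hp.1

section Piecewise

variable {g h : ℝ → ℝ}

theorem continuousAt_zero_ite_neg (hg : Tendsto g (𝓝[<] 0) (𝓝 (h 0))) (hh : ContinuousAt h 0) :
    ContinuousAt (fun x ↦ if x < 0 then g x else h x) 0 := by
  rw [continuousAt_iff_continuous_left'_right']
  constructor
  · simp only [ContinuousWithinAt, lt_irrefl, if_false]
    exact hg.congr' (eventually_nhdsWithin_of_forall fun x (hx : x < 0) ↦ (if_pos hx).symm)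
  · exact hh.continuousWithinAt.congr (fun x (hx : 0 < x) ↦ if_neg hx.not_gt)
      (if_neg (lt_irrefl 0))

theorem continuous_ite_neg (hg : ContinuousOn g (Iio 0)) (hh : Continuous h)
    (hlim : Tendsto g (𝓝[<] 0) (𝓝 (h 0))) : Continuous fun x ↦ if x < 0 then g x else h x := by
  refine continuous_iff_continuousAt.2 fun x ↦ ?_
  rcases lt_trichotomy x 0 with hx | rfl | hx
  · exact (hg.continuousAt (Iio_mem_nhds hx)).congr
      (eventually_lt_nhds hx |>.mono fun y hy ↦ (if_pos hy).symm)
  · exact continuousAt_zero_ite_neg hlim hh.continuousAt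
  · exact hh.continuousAt.congr (eventually_gt_nhds hx |>.mono fun y hy ↦ (if_neg hy.not_gt).symm)

theorem hasDerivAt_ite_neg {g' h' : ℝ → ℝ} {x : ℝ} (hx : x ≠ 0)
    (hg : x < 0 → HasDerivAt g (g' x) x) (hh : 0 < x → HasDerivAt h (h' x) x) :
    HasDerivAt (fun y ↦ if y < 0 then g y else h y) (if x < 0 then g' x else h' x) x := by
  rcases hx.lt_or_gt with hx | hx
  · rw [if_pos hx]
    exact (hg hx).congr_of_eventuallyEq (eventually_lt_nhds hx |>.mono fun y hy ↦ if_pos hy)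
  · rw [if_neg hx.not_gt]
    exact (hh hx).congr_of_eventuallyEq
      (eventually_gt_nhds hx |>.mono fun y hy ↦ if_neg hy.not_gt)

theorem monotone_ite_neg {c : ℝ} (hg : MonotoneOn g (Iio 0)) (hc : ∀ x < 0, g x ≤ c) :
    Monotone fun x ↦ if x < 0 then g x else c := by
  intro a b hab
  by_cases hb : b < 0
  · simp only [hab.trans_lt hb, hb, if_true]
    exact hg (hab.trans_lt hb) hb hab
  · simp only [hb, if_false]
    split_ifs with ha
    exacts [hc a ha, le_rfl]

end Piecewise

section NegOneDiv

variable {f F G : ℝ → ℝ} {a m : ℝ}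

theorem neg_one_div_pos {x : ℝ} (hx : x < 0) : 0 < -1 / x :=
  div_pos_of_neg_of_neg neg_one_lt_zero hx

theorem tendsto_neg_one_div_nhdsLT_zero : Tendsto (fun x : ℝ ↦ -1 / x) (𝓝[<] 0) atTop := by
  simpa [neg_div, one_div] using tendsto_inv_nhdsLT_zero (𝕜 := ℝ)

theorem hasDerivAt_comp_neg_one_div_add_mul {x : ℝ} (hx : x ≠ 0)
    (hF : HasDerivAt F (f (-1 / x)) (-1 / x)) (hG : HasDerivAt G (-1 / x * f (-1 / x)) (-1 / x)) :
    HasDerivAt (fun y ↦ F (-1 / y) + y * G (-1 / y)) (G (-1 / x)) x := by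
  have hinv : HasDerivAt (fun y : ℝ ↦ -1 / y) (1 / x ^ 2) x := by
    simpa [neg_div, one_div] using (hasDerivAt_inv hx).fun_neg
  refine ((hF.comp x hinv).fun_add ((hasDerivAt_id' x).fun_mul (hG.comp x hinv))).congr_deriv ?_
  simp only [Function.comp_apply]
  field_simp
  ring

theorem tendsto_comp_neg_one_div_add_mul (hF : Tendsto F atTop (𝓝 a))
    (hG : Tendsto G atTop (𝓝 m)) :
    Tendsto (fun y ↦ F (-1 / y) + y * G (-1 / y)) (𝓝[<] 0) (𝓝 a) := by
  have hid : Tendsto (fun y : ℝ ↦ y) (𝓝[<] 0) (𝓝 0) := tendsto_nhdsWithin_of_tendsto_nhds tendsto_id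
  simpa using (hF.comp tendsto_neg_one_div_nhdsLT_zero).add
    (hid.mul (hG.comp tendsto_neg_one_div_nhdsLT_zero))

theorem continuous_ite_comp_neg_one_div (hG : Continuous G) (hlim : Tendsto G atTop (𝓝 m)) :
    Continuous fun x ↦ if x < 0 then G (-1 / x) else m :=
  continuous_ite_neg (hG.comp_continuousOn
    (continuousOn_const.div continuousOn_id fun x (hx : x < 0) ↦ hx.ne)) continuous_const
    (hlim.comp tendsto_neg_one_div_nhdsLT_zero)

theorem monotone_ite_comp_neg_one_div (hG : MonotoneOn G (Ici 0)) (hlim : Tendsto G atTop (𝓝 m)) :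
    Monotone fun x ↦ if x < 0 then G (-1 / x) else m := by
  have hG_le : ∀ b ≥ 0, G b ≤ m := fun b hb ↦ ge_of_tendsto hlim
    (eventually_ge_atTop b |>.mono fun c hc ↦ hG hb (hb.trans hc) hc)
  refine monotone_ite_neg (fun x (hx : x < 0) y (hy : y < 0) hxy ↦ ?_)
    fun x hx ↦ hG_le _ (neg_one_div_pos hx).le
  refine hG (neg_one_div_pos hx).le (neg_one_div_pos hy).le ?_
  simpa [neg_div] using one_div_le_one_div_of_neg_of_le hy hxy

theorem hasDerivAt_ite_comp_neg_one_div (hF : ∀ b, HasDerivAt F (f b) b)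
    (hG : ∀ b, HasDerivAt G (b * f b) b) (hF_lim : Tendsto F atTop (𝓝 a))
    (hG_lim : Tendsto G atTop (𝓝 m)) (x : ℝ) :
    HasDerivAt (fun y ↦ if y < 0 then F (-1 / y) + y * G (-1 / y) else a + y * m)
      (if x < 0 then G (-1 / x) else m) x := by
  have hG_cont : Continuous G := continuous_iff_continuousAt.2 fun b ↦ (hG b).continuousAt
  refine hasDerivAt_of_hasDerivAt_of_ne' (fun y hy ↦ hasDerivAt_ite_neg (g' := fun x ↦ G (-1 / x))
      (h' := fun _ ↦ m) hy ?_ ?_) (continuousAt_zero_ite_neg ?_ (by fun_prop))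
      (continuous_ite_comp_neg_one_div hG_cont hG_lim).continuousAt x
  · exact fun hy ↦ hasDerivAt_comp_neg_one_div_add_mul hy.ne (hF _) (hG _)
  · exact fun _ ↦ (((hasDerivAt_id' y).mul_const m).const_add a).congr_deriv (one_mul m)
  · simpa using tendsto_comp_neg_one_div_add_mul hF_lim hG_lim

end NegOneDiv

theorem stmt_2_general (f F G H : ℝ → ℝ) (mbar lam : ℝ)
    (hf_cont : Continuous f)
    (hf_pos : ∀ p : ℝ, 0 < p → 0 < f p)
    (hf_int : (∫ p in Set.Ioi (0 : ℝ), f p) = 1)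
    (hmean_int : MeasureTheory.IntegrableOn (fun p : ℝ => p * f p) (Set.Ioi 0))
    (hmbar : mbar = ∫ p in Set.Ioi (0 : ℝ), p * f p)
    (hF : ∀ b : ℝ, F b = ∫ p in (0 : ℝ)..b, f p)
    (hG : ∀ b : ℝ, G b = ∫ p in (0 : ℝ)..b, p * f p)
    (hlam : 0 < lam)
    (hHneg : ∀ x < (0 : ℝ), H x = -(lam * x) * ∫ p in (0 : ℝ)..(-1 / x), F p)
    (hHpos : ∀ x : ℝ, 0 ≤ x → H x = lam * (1 + x * mbar)) :
    ConvexOn ℝ Set.univ H ∧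
      ∃ H' : ℝ → ℝ, Continuous H' ∧ (∀ x : ℝ, HasDerivAt H (H' x) x) ∧
        (∀ x < (0 : ℝ), H' x = lam * G (-1 / x)) ∧
        (∀ x : ℝ, 0 ≤ x → H' x = lam * mbar) := by
  have hpf_cont : Continuous fun p ↦ p * f p := continuous_id.mul hf_cont
  have hFd : ∀ b, HasDerivAt F (f b) b := fun b ↦ by
    rw [funext hF]; exact (hf_cont.integral_hasStrictDerivAt 0 b).hasDerivAt
  have hGd : ∀ b, HasDerivAt G (b * f b) b := fun b ↦ by
    rw [funext hG]; exact (hpf_cont.integral_hasStrictDerivAt 0 b).hasDerivAt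
  have hF_lim : Tendsto F atTop (𝓝 1) := by
    rw [funext hF, ← hf_int]
    exact intervalIntegral_tendsto_integral_Ioi 0
      (Integrable.of_integral_ne_zero (by simp [hf_int])) tendsto_id
  have hG_lim : Tendsto G atTop (𝓝 mbar) := by
    rw [funext hG, hmbar]; exact intervalIntegral_tendsto_integral_Ioi 0 hmean_int tendsto_id
  have hG_mono : MonotoneOn G (Ici 0) := by
    rw [funext hG]
    exact monotoneOn_integral_of_nonneg hpf_cont fun p hp ↦ mul_nonneg hp.le (hf_pos p hp).le
  have hH_eq : H = fun x ↦ lam * if x < 0 then F (-1 / x) + x * G (-1 / x) else 1 + x * mbar := by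
    funext x
    split_ifs with hx
    · simp only [hHneg x hx, hF, integral_primitive_eq_mul_sub hf_cont, ← hG]
      field_simp [hx.ne]
      ring
    · exact hHpos x (not_lt.1 hx)
  set H' : ℝ → ℝ := fun x ↦ lam * if x < 0 then G (-1 / x) else mbar
  have hH_deriv : ∀ x, HasDerivAt H (H' x) x := fun x ↦
    hH_eq ▸ (hasDerivAt_ite_comp_neg_one_div hFd hGd hF_lim hG_lim x).const_mul lam
  have hH'_mono : Monotone H' := (monotone_ite_comp_neg_one_div hG_mono hG_lim).const_mul hlam.le
  have hH_deriv_eq : deriv H = H' := funext fun x ↦ (hH_deriv x).deriv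
  exact ⟨(hH_deriv_eq ▸ hH'_mono).convexOn_univ_of_deriv fun x ↦ (hH_deriv x).differentiableAt,
    H', continuous_const.mul (continuous_ite_comp_neg_one_div
      (continuous_iff_continuousAt.2 fun b ↦ (hGd b).continuousAt) hG_lim), hH_deriv,
    fun x hx ↦ by simp only [H', if_pos hx], fun x hx ↦ by simp only [H', if_neg hx.not_gt]⟩

/-- The function `H` is convex on `ℝ` and continuously differentiable, with
`H'(x) = λ G(-1/x)` for `x < 0` and `H'(x) = λ m̄` for `x ≥ 0`. -/
theorem stmt_2 (f F G H : ℝ → ℝ) (mbar lam : ℝ)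
    (hf_cont : Continuous f)
    (hf_nonpos : ∀ p ≤ (0 : ℝ), f p = 0)
    (hf_pos : ∀ p : ℝ, 0 < p → 0 < f p)
    (hf_int : (∫ p in Set.Ioi (0 : ℝ), f p) = 1)
    (hf_tail : Filter.Tendsto (fun p : ℝ => p ^ 3 * f p) Filter.atTop (nhds 0))
    (hmean_int : MeasureTheory.IntegrableOn (fun p : ℝ => p * f p) (Set.Ioi 0))
    (hmbar : mbar = ∫ p in Set.Ioi (0 : ℝ), p * f p)
    (hF : ∀ b : ℝ, F b = ∫ p in (0 : ℝ)..b, f p)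
    (hG : ∀ b : ℝ, G b = ∫ p in (0 : ℝ)..b, p * f p)
    (hlam : 0 < lam)
    (hHneg : ∀ x < (0 : ℝ), H x = -(lam * x) * ∫ p in (0 : ℝ)..(-1 / x), F p)
    (hHpos : ∀ x : ℝ, 0 ≤ x → H x = lam * (1 + x * mbar)) :
    ConvexOn ℝ Set.univ H ∧
      ∃ H' : ℝ → ℝ, Continuous H' ∧ (∀ x : ℝ, HasDerivAt H (H' x) x) ∧
        (∀ x < (0 : ℝ), H' x = lam * G (-1 / x)) ∧
        (∀ x : ℝ, 0 ≤ x → H' x = lam * mbar) :=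
  stmt_2_general f F G H mbar lam hf_cont hf_pos hf_int hmean_int hmbar hF hG hlam hHneg hHpos
end

section
/- The restriction of the derivative H' to (-∞,0) is strictly increasing and is a bijection from (-∞,0) onto (0, λ m̄); moreover H'(x) → 0 as x → -∞ and H'(x) → λ m̄ as x → 0⁻. -/
open MeasureTheory Filter Set Topology

/-- The restriction of `H'` to `(-∞,0)` is strictly increasing and a bijection from
`(-∞,0)` onto `(0, λ m̄)`; moreover `H'(x) → 0` as `x → -∞` and `H'(x) → λ m̄` as `x → 0⁻`. -/
theorem stmt_4 (f F G H' : ℝ → ℝ) (mbar lam : ℝ)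
    (hf_cont : Continuous f)
    (hf_nonpos : ∀ p ≤ (0 : ℝ), f p = 0)
    (hf_pos : ∀ p : ℝ, 0 < p → 0 < f p)
    (hf_int : (∫ p in Set.Ioi (0 : ℝ), f p) = 1)
    (hf_tail : Filter.Tendsto (fun p : ℝ => p ^ 3 * f p) Filter.atTop (nhds 0))
    (hmean_int : MeasureTheory.IntegrableOn (fun p : ℝ => p * f p) (Set.Ioi 0))
    (hmbar : mbar = ∫ p in Set.Ioi (0 : ℝ), p * f p)
    (hF : ∀ b : ℝ, F b = ∫ p in (0 : ℝ)..b, f p)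
    (hG : ∀ b : ℝ, G b = ∫ p in (0 : ℝ)..b, p * f p)
    (hlam : 0 < lam)
    (hH'neg : ∀ x < (0 : ℝ), H' x = lam * G (-1 / x))
    (hH'pos : ∀ x : ℝ, 0 ≤ x → H' x = lam * mbar) :
    StrictMonoOn H' (Set.Iio 0) ∧
      Set.BijOn H' (Set.Iio 0) (Set.Ioo 0 (lam * mbar)) ∧
      Filter.Tendsto H' Filter.atBot (nhds 0) ∧
      Filter.Tendsto H' (nhdsWithin 0 (Set.Iio 0)) (nhds (lam * mbar)) := by
  set g : ℝ → ℝ := fun p => p * f p with hgdef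
  have hg_cont : Continuous g := continuous_id.mul hf_cont
  have hg_pos : ∀ p : ℝ, 0 < p → 0 < g p := fun p hp => mul_pos hp (hf_pos p hp)
  have hg_nonneg : ∀ p : ℝ, 0 ≤ g p := by
    intro p
    rcases le_or_gt p 0 with h | h
    · simp [hgdef, hf_nonpos p h]
    · exact (hg_pos p h).le
  have hg_ii : ∀ a b : ℝ, IntervalIntegrable g volume a b :=
    fun a b => hg_cont.intervalIntegrable a b
  have hG_cont : Continuous G := by
    have h := intervalIntegral.continuous_primitive (μ := volume) hg_ii 0
    have : G = fun b => ∫ x in (0:ℝ)..b, g x := funext hG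
    rw [this]; exact h
  have hG0 : G 0 = 0 := by simp [hG 0]
  -- G positive for b > 0
  have hG_pos : ∀ b : ℝ, 0 < b → 0 < G b := by
    intro b hb
    rw [hG b]
    exact intervalIntegral.intervalIntegral_pos_of_pos_on (hg_ii 0 b)
      (fun x hx => hg_pos x hx.1) hb
  -- G strictly monotone on [0, ∞)
  have hG_smono : StrictMonoOn G (Ici 0) := by
    intro a ha b _ hab
    have hsub : G b - G a = ∫ x in a..b, g x := by
      rw [hG a, hG b]
      exact intervalIntegral.integral_interval_sub_left (hg_ii 0 b) (hg_ii 0 a)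
    have hpos : 0 < ∫ x in a..b, g x :=
      intervalIntegral.intervalIntegral_pos_of_pos_on (hg_ii a b)
        (fun x hx => hg_pos x (lt_of_le_of_lt ha hx.1)) hab
    linarith [hsub ▸ hpos]
  have hG_mono : Monotone G := by
    intro a b hab
    have hsub : G b - G a = ∫ x in a..b, g x := by
      rw [hG a, hG b]
      exact intervalIntegral.integral_interval_sub_left (hg_ii 0 b) (hg_ii 0 a)
    have hnn : 0 ≤ ∫ x in a..b, g x :=
      intervalIntegral.integral_nonneg hab (fun x _ => hg_nonneg x)
    linarith [hsub ▸ hnn]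
  -- G tends to mbar at +∞
  have hG_top : Tendsto G atTop (𝓝 mbar) := by
    have h := intervalIntegral_tendsto_integral_Ioi (μ := volume) 0 hmean_int tendsto_id
    rw [hmbar]
    have : G = fun b => ∫ x in (0:ℝ)..b, g x := funext hG
    rw [this]; exact h
  -- G strictly below mbar
  have hG_lt : ∀ b : ℝ, G b < mbar := by
    intro b
    have h1 : G b < G (|b| + 1) := by
      rcases le_or_gt b 0 with h | h
      · calc G b ≤ G 0 := hG_mono h
          _ < G (|b| + 1) := by
            rw [hG0]; exact hG_pos _ (by positivity)
      · exact hG_smono (Set.mem_Ici.mpr h.le)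
          (Set.mem_Ici.mpr (by positivity))
          (by nlinarith [abs_nonneg b, le_abs_self b])
    have h2 : G (|b| + 1) ≤ mbar := hG_mono.ge_of_tendsto hG_top _
    linarith
  -- the map x ↦ -1/x
  have hphi_pos : ∀ x : ℝ, x < 0 → 0 < -1 / x := by
    intro x hx
    rw [div_pos_iff]
    right; constructor <;> linarith
  have hphi_mono : ∀ x y : ℝ, x < 0 → y < 0 → x < y → -1 / x < -1 / y := by
    intro x y hx hy hxy
    have e1 : -1 / x = (-x)⁻¹ := by rw [inv_neg, neg_div, one_div]
    have e2 : -1 / y = (-y)⁻¹ := by rw [inv_neg, neg_div, one_div]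
    rw [e1, e2]
    exact inv_strictAnti₀ (by linarith) (by linarith)
  -- strict monotonicity of H' on Iio 0
  have hmonoH : StrictMonoOn H' (Set.Iio 0) := by
    intro x hx y hy hxy
    rw [hH'neg x hx, hH'neg y hy]
    exact mul_lt_mul_of_pos_left
      (hG_smono (hphi_pos x hx).le (hphi_pos y hy).le (hphi_mono x y hx hy hxy)) hlam
  have hmaps : Set.MapsTo H' (Set.Iio 0) (Set.Ioo 0 (lam * mbar)) := by
    intro x hx
    rw [Set.mem_Iio] at hx
    rw [hH'neg x hx]
    constructor
    · exact mul_pos hlam (hG_pos _ (hphi_pos x hx))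
    · exact mul_lt_mul_of_pos_left (hG_lt _) hlam
  have hsurj : Set.SurjOn H' (Set.Iio 0) (Set.Ioo 0 (lam * mbar)) := by
    intro y hy
    obtain ⟨hy1, hy2⟩ := hy
    set c := y / lam with hc
    have hc0 : 0 < c := div_pos hy1 hlam
    have hcm : c < mbar := by
      rw [hc, div_lt_iff₀ hlam]; linarith [hy2, mul_comm lam mbar]
    obtain ⟨B, hB⟩ : ∃ B : ℝ, c < G B := by
      have := hG_top.eventually (eventually_gt_nhds hcm)
      exact this.exists
    have hicc : c ∈ Set.Icc (G 0) (G B) := ⟨by rw [hG0]; exact hc0.le, hB.le⟩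
    have h0B : (0:ℝ) ≤ B := by
      by_contra h
      push_neg at h
      have : G B ≤ G 0 := hG_mono h.le
      rw [hG0] at this; linarith
    obtain ⟨b, hbmem, hgb⟩ := intermediate_value_Icc h0B hG_cont.continuousOn hicc
    have hb0 : 0 < b := by
      rcases lt_or_eq_of_le hbmem.1 with h | h
      · exact h
      · exfalso; rw [← h, hG0] at hgb; linarith
    refine ⟨-1 / b, ?_, ?_⟩
    · rw [Set.mem_Iio]
      rw [div_neg_iff]; right; constructor <;> linarith
    · have hneg : -1 / b < 0 := by
        rw [div_neg_iff]; right; constructor <;> linarith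
      rw [hH'neg _ hneg]
      have : -1 / (-1 / b) = b := by field_simp
      rw [this, hgb, hc, mul_div_cancel₀ _ (ne_of_gt hlam)]
  have hinj : Set.InjOn H' (Set.Iio 0) := hmonoH.injOn
  -- tendsto atBot
  have hbot : Tendsto H' atBot (𝓝 0) := by
    have hφ : Tendsto (fun x : ℝ => -1 / x) atBot (𝓝 0) := by
      have h1 : Tendsto (fun x : ℝ => (-x)⁻¹) atBot (𝓝 0) :=
        tendsto_inv_atTop_zero.comp tendsto_neg_atBot_atTop
      refine h1.congr (fun x => by rw [inv_neg, neg_div, one_div])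
    have h3 : Tendsto (fun x : ℝ => lam * G (-1 / x)) atBot (𝓝 0) := by
      have := ((hG_cont.tendsto 0).comp hφ).const_mul lam
      rw [hG0, mul_zero] at this
      exact this
    refine h3.congr' ?_
    filter_upwards [eventually_lt_atBot (0:ℝ)] with x hx
    exact (hH'neg x hx).symm
  -- tendsto at 0⁻
  have htop : Tendsto H' (𝓝[<] (0:ℝ)) (𝓝 (lam * mbar)) := by
    have hneg : Tendsto (fun x : ℝ => -x) (𝓝[<] (0:ℝ)) (𝓝[>] (0:ℝ)) := by
      apply tendsto_nhdsWithin_of_tendsto_nhds_of_eventually_within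
      · have := (continuous_neg.tendsto (0:ℝ))
        rw [neg_zero] at this
        exact this.mono_left nhdsWithin_le_nhds
      · filter_upwards [self_mem_nhdsWithin] with x hx
        simpa using hx
    have hφ : Tendsto (fun x : ℝ => -1 / x) (𝓝[<] (0:ℝ)) atTop := by
      have := tendsto_inv_nhdsGT_zero.comp hneg
      refine this.congr (fun x => ?_)
      show (-x)⁻¹ = -1 / x
      rw [inv_neg, neg_div, one_div]
    have h3 : Tendsto (fun x : ℝ => lam * G (-1 / x)) (𝓝[<] (0:ℝ)) (𝓝 (lam * mbar)) :=
      (hG_top.comp hφ).const_mul lam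
    refine h3.congr' ?_
    filter_upwards [self_mem_nhdsWithin] with x hx
    exact (hH'neg x hx).symm
  exact ⟨hmonoH, ⟨hmaps, hinj, hsurj⟩, hbot, htop⟩
end

section
/- The restriction of G to [0,∞) is a strictly increasing continuous bijection from [0,∞) onto [0, m̄); denoting its inverse by G⁻¹, the function L(a) := -λ F(G⁻¹(a/λ)) defined for a ∈ [0, λ m̄) is strictly convex and is differentiable on (0, λ m̄) with L'(a) = -1/G⁻¹(a/λ). -/
/-!
`G` is a primitive of `p f(p)`, which is positive on `(0, ∞)`, so `G` is strictly increasing on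
`[0, ∞)`; it tends to `m̄` but stays below it, since the tail `∫_b^∞ p f(p) dp` is positive, and
the intermediate value theorem gives the bijection onto `[0, m̄)`. A right inverse `G⁻¹` of a
strictly increasing map is strictly increasing, hence continuous, so the inverse function rule
gives `d F(G⁻¹ a)/da = f(x) / (x f(x)) = 1 / x` with `x = G⁻¹ a`. Thus
`L'(a) = -1 / G⁻¹(a/λ)`, which is strictly increasing, and `L` is strictly convex.
-/

open MeasureTheory Filter Set Topology

section RightInverse

variable {α β : Type*} [LinearOrder α] [LinearOrder β] {G : α → β} {g : β → α} {s : Set β}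
  {t : Set α}

theorem StrictMonoOn.strictMonoOn_of_rightInvOn (hG : StrictMonoOn G t) (hg : MapsTo g s t)
    (hinv : RightInvOn g G s) : StrictMonoOn g s := by
  intro u hu v hv huv
  rwa [← hG.lt_iff_lt (hg hu) (hg hv), hinv hu, hinv hv]

theorem StrictMonoOn.continuousOn_of_rightInvOn [TopologicalSpace α] [OrderTopology α]
    [TopologicalSpace β] [OrderTopology β] (hG : StrictMonoOn G t) (ht : t.OrdConnected)
    (hg : MapsTo g s t) (hinv : RightInvOn g G s) : ContinuousOn g s := by
  intro a ha
  rw [ContinuousWithinAt, tendsto_order]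
  constructor
  · intro c hc
    by_cases hct : c ∈ t
    · have hGc : G c < a := hinv ha ▸ hG hct (hg ha) hc
      filter_upwards [mem_nhdsWithin_of_mem_nhds (Ioi_mem_nhds hGc), self_mem_nhdsWithin]
        with a' hca' ha'
      rwa [← hG.lt_iff_lt hct (hg ha'), hinv ha']
    · -- as `t` is order-connected, `c ∉ t` with `c < g a ∈ t` puts `c` below all of `t`
      filter_upwards [self_mem_nhdsWithin] with a' ha'
      by_contra! hle
      exact hct (ht.out (hg ha') (hg ha) ⟨hle, hc.le⟩)
  · intro c hc
    by_cases hct : c ∈ t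
    · have hGc : a < G c := hinv ha ▸ hG (hg ha) hct hc
      filter_upwards [mem_nhdsWithin_of_mem_nhds (Iio_mem_nhds hGc), self_mem_nhdsWithin]
        with a' hca' ha'
      rwa [← hG.lt_iff_lt (hg ha') hct, hinv ha']
    · filter_upwards [self_mem_nhdsWithin] with a' ha'
      by_contra! hle
      exact hct (ht.out (hg ha) (hg ha') ⟨hc.le, hle⟩)

end RightInverse

theorem HasDerivAt.comp_of_local_right_inverse {F G g : ℝ → ℝ} {F' G' a : ℝ}
    (hF : HasDerivAt F F' (g a)) (hG : HasDerivAt G G' (g a)) (hG' : G' ≠ 0)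
    (hg : ContinuousAt g a) (hinv : ∀ᶠ y in 𝓝 a, G (g y) = y) :
    HasDerivAt (fun y => F (g y)) (F' / G') a := by
  rw [div_eq_mul_inv]
  exact hF.comp a (hG.of_local_left_inverse hg hG' hinv)

section Primitive

variable {g : ℝ → ℝ} {a : ℝ}

theorem strictMonoOn_intervalIntegral_of_pos (hg : Continuous g) (hpos : ∀ x, a < x → 0 < g x) :
    StrictMonoOn (fun b => ∫ x in a..b, g x) (Ici a) := by
  intro b hb c hc hbc
  have hsplit : (∫ x in a..b, g x) + ∫ x in b..c, g x = ∫ x in a..c, g x :=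
    intervalIntegral.integral_add_adjacent_intervals (hg.intervalIntegrable _ _)
      (hg.intervalIntegrable _ _)
  have hpos : 0 < ∫ x in b..c, g x :=
    intervalIntegral.intervalIntegral_pos_of_pos_on (hg.intervalIntegrable _ _)
      (fun x hx => hpos x (lt_of_le_of_lt hb hx.1)) hbc
  simp only
  linarith

theorem setIntegral_Ioi_pos (hint : IntegrableOn g (Ioi a)) (hpos : ∀ x, a < x → 0 < g x) :
    0 < ∫ x in Ioi a, g x := by
  rw [setIntegral_pos_iff_support_of_nonneg_ae
    ((ae_restrict_iff' measurableSet_Ioi).2 (ae_of_all _ fun x hx => (hpos x hx).le)) hint]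
  calc (0 : ENNReal) < volume (Ioi a) := by simp [Real.volume_Ioi]
    _ ≤ volume (Function.support g ∩ Ioi a) :=
      measure_mono fun x hx => ⟨(hpos x hx).ne', hx⟩

theorem intervalIntegral_lt_setIntegral_Ioi (hint : IntegrableOn g (Ioi a))
    (hpos : ∀ x, a < x → 0 < g x) {b : ℝ} (hb : a ≤ b) :
    ∫ x in a..b, g x < ∫ x in Ioi a, g x := by
  have hsplit : ∫ x in Ioi a, g x = (∫ x in a..b, g x) + ∫ x in Ioi b, g x := by
    rw [intervalIntegral.integral_of_le hb, ← setIntegral_union (Ioc_disjoint_Ioi le_rfl)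
      measurableSet_Ioi (hint.mono_set Ioc_subset_Ioi_self) (hint.mono_set (Ioi_subset_Ioi hb)),
      Ioc_union_Ioi_eq_Ioi hb]
  have htail := setIntegral_Ioi_pos (hint.mono_set (Ioi_subset_Ioi hb))
    fun x hx => hpos x (hb.trans_lt hx)
  linarith

theorem bijOn_intervalIntegral_Ici (hg : Continuous g) (hint : IntegrableOn g (Ioi a))
    (hpos : ∀ x, a < x → 0 < g x) :
    BijOn (fun b => ∫ x in a..b, g x) (Ici a) (Ico 0 (∫ x in Ioi a, g x)) := by
  have hmono := strictMonoOn_intervalIntegral_of_pos hg hpos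
  have hcont : Continuous fun b => ∫ x in a..b, g x :=
    intervalIntegral.continuous_primitive (fun _ _ => hg.intervalIntegrable _ _) a
  refine ⟨fun b hb => ⟨?_, intervalIntegral_lt_setIntegral_Ioi hint hpos hb⟩, hmono.injOn, ?_⟩
  · simpa using hmono.monotoneOn self_mem_Ici hb hb
  · intro y hy
    obtain ⟨b, hyb, hab⟩ := ((intervalIntegral_tendsto_integral_Ioi a hint tendsto_id).eventually
      (eventually_gt_nhds hy.2) |>.and (eventually_ge_atTop a)).exists
    obtain ⟨x, hx, rfl⟩ := intermediate_value_Icc hab hcont.continuousOn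
      (by simpa using ⟨hy.1, hyb.le⟩)
    exact ⟨x, hx.1, rfl⟩

end Primitive

section Rescaling

variable {H H' : ℝ → ℝ} {c : ℝ}

theorem HasDerivAt.neg_mul_comp_div {h a : ℝ} (hc : c ≠ 0) (hH : HasDerivAt H h (a / c)) :
    HasDerivAt (fun y => -c * H (y / c)) (-h) a := by
  have hcomp := (hH.comp a ((hasDerivAt_id a).div_const c)).const_mul (-c)
  exact hcomp.congr_deriv (by field_simp)

theorem strictConvexOn_neg_mul_comp_div {m : ℝ} (hc : 0 < c) (hcont : ContinuousOn H (Ico 0 m))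
    (hderiv : ∀ a ∈ Ioo 0 m, HasDerivAt H (H' a) a) (hanti : StrictAntiOn H' (Ioo 0 m)) :
    StrictConvexOn ℝ (Ico 0 (c * m)) (fun y => -c * H (y / c)) := by
  have hIco : MapsTo (· / c) (Ico 0 (c * m)) (Ico 0 m) := fun y hy =>
    ⟨div_nonneg hy.1 hc.le, (div_lt_iff₀' hc).2 hy.2⟩
  have hIoo : MapsTo (· / c) (Ioo 0 (c * m)) (Ioo 0 m) := fun y hy =>
    ⟨div_pos hy.1 hc, (div_lt_iff₀' hc).2 hy.2⟩
  refine StrictMonoOn.strictConvexOn_of_deriv (convex_Ico _ _) ?_ ?_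
  · exact continuousOn_const.mul (hcont.comp (continuousOn_id.div_const c) hIco)
  · rw [interior_Ico]
    intro x hx y hy hxy
    rw [((hderiv _ (hIoo hx)).neg_mul_comp_div hc.ne').deriv,
      ((hderiv _ (hIoo hy)).neg_mul_comp_div hc.ne').deriv, neg_lt_neg_iff]
    exact hanti (hIoo hx) (hIoo hy) (div_lt_div_of_pos_right hxy hc)

end Rescaling

theorem stmt_5_general (f F G : ℝ → ℝ) (mbar lam : ℝ)
    (hf_cont : Continuous f)
    (hf_pos : ∀ p : ℝ, 0 < p → 0 < f p)
    (hmean_int : MeasureTheory.IntegrableOn (fun p : ℝ => p * f p) (Set.Ioi 0))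
    (hmbar : mbar = ∫ p in Set.Ioi (0 : ℝ), p * f p)
    (hF : ∀ b : ℝ, F b = ∫ p in (0 : ℝ)..b, f p)
    (hG : ∀ b : ℝ, G b = ∫ p in (0 : ℝ)..b, p * f p)
    (hlam : 0 < lam) :
    StrictMonoOn G (Set.Ici 0) ∧ ContinuousOn G (Set.Ici 0) ∧
      Set.BijOn G (Set.Ici 0) (Set.Ico 0 mbar) ∧
      ∀ Ginv : ℝ → ℝ,
        (∀ a ∈ Set.Ico (0 : ℝ) mbar, Ginv a ∈ Set.Ici (0 : ℝ) ∧ G (Ginv a) = a) →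
        StrictConvexOn ℝ (Set.Ico 0 (lam * mbar))
            (fun a : ℝ => -lam * F (Ginv (a / lam))) ∧
          ∀ a ∈ Set.Ioo (0 : ℝ) (lam * mbar),
            HasDerivAt (fun a' : ℝ => -lam * F (Ginv (a' / lam)))
              (-1 / Ginv (a / lam)) a := by
  have hg_cont : Continuous fun p : ℝ => p * f p := continuous_id.mul hf_cont
  have hg_pos : ∀ p : ℝ, 0 < p → 0 < p * f p := fun p hp => mul_pos hp (hf_pos p hp)
  have hF_deriv : ∀ x, HasDerivAt F (f x) x := fun x => by
    rw [funext hF]; exact (hf_cont.integral_hasStrictDerivAt 0 x).hasDerivAt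
  have hG_deriv : ∀ x, HasDerivAt G (x * f x) x := fun x => by
    rw [funext hG]; exact (hg_cont.integral_hasStrictDerivAt 0 x).hasDerivAt
  have hF_cont : Continuous F := continuous_iff_continuousAt.2 fun x => (hF_deriv x).continuousAt
  have hG_cont : Continuous G := continuous_iff_continuousAt.2 fun x => (hG_deriv x).continuousAt
  have hG_mono : StrictMonoOn G (Ici 0) := by
    simpa only [← hG] using strictMonoOn_intervalIntegral_of_pos hg_cont hg_pos
  have hG_bij : BijOn G (Ici 0) (Ico 0 mbar) := by
    simpa only [← hG, ← hmbar] using bijOn_intervalIntegral_Ici hg_cont hmean_int hg_pos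
  refine ⟨hG_mono, hG_cont.continuousOn, hG_bij, fun Ginv hGinv => ?_⟩
  have hmaps : MapsTo Ginv (Ico 0 mbar) (Ici 0) := fun a ha => (hGinv a ha).1
  have hinv : RightInvOn Ginv G (Ico 0 mbar) := fun a ha => (hGinv a ha).2
  have hGinv_mono := hG_mono.strictMonoOn_of_rightInvOn hmaps hinv
  have hGinv_cont := hG_mono.continuousOn_of_rightInvOn ordConnected_Ici hmaps hinv
  have hGinv_pos : ∀ a ∈ Ioo 0 mbar, 0 < Ginv a := fun a ha =>
    have h0 : (0 : ℝ) ∈ Ico 0 mbar := ⟨le_rfl, ha.1.trans ha.2⟩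
    (hmaps h0).trans_lt (hGinv_mono h0 (Ioo_subset_Ico_self ha) ha.1)
  have hH : ∀ a ∈ Ioo 0 mbar, HasDerivAt (fun a => F (Ginv a)) (1 / Ginv a) a := by
    intro a ha
    have hx := hGinv_pos a ha
    have hnhds : Ico 0 mbar ∈ 𝓝 a :=
      mem_of_superset (Ioo_mem_nhds ha.1 ha.2) Ioo_subset_Ico_self
    refine ((hF_deriv _).comp_of_local_right_inverse (hG_deriv _) (hg_pos _ hx).ne'
      ((hGinv_cont a (mem_of_mem_nhds hnhds)).continuousAt hnhds)
      (eventually_of_mem hnhds hinv)).congr_deriv ?_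
    field_simp [(hf_pos _ hx).ne']
  refine ⟨strictConvexOn_neg_mul_comp_div hlam (hF_cont.comp_continuousOn hGinv_cont) hH ?_,
    fun a ha => ?_⟩
  · exact fun x hx y hy hxy => one_div_lt_one_div_of_lt (hGinv_pos x hx)
      (hGinv_mono (Ioo_subset_Ico_self hx) (Ioo_subset_Ico_self hy) hxy)
  · simpa only [neg_div] using
      (hH (a / lam) ⟨div_pos ha.1 hlam, (div_lt_iff₀' hlam).2 ha.2⟩).neg_mul_comp_div hlam.ne'

/-- The restriction of `G` to `[0,∞)` is a strictly increasing continuous bijection from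
`[0,∞)` onto `[0, m̄)`; denoting its inverse by `G⁻¹`, the function
`L(a) := -λ F(G⁻¹(a/λ))` defined for `a ∈ [0, λ m̄)` is strictly convex and is
differentiable on `(0, λ m̄)` with `L'(a) = -1/G⁻¹(a/λ)`. -/
theorem stmt_5 (f F G : ℝ → ℝ) (mbar lam : ℝ)
    (hf_cont : Continuous f)
    (hf_nonpos : ∀ p ≤ (0 : ℝ), f p = 0)
    (hf_pos : ∀ p : ℝ, 0 < p → 0 < f p)
    (hf_int : (∫ p in Set.Ioi (0 : ℝ), f p) = 1)
    (hf_tail : Filter.Tendsto (fun p : ℝ => p ^ 3 * f p) Filter.atTop (nhds 0))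
    (hmean_int : MeasureTheory.IntegrableOn (fun p : ℝ => p * f p) (Set.Ioi 0))
    (hmbar : mbar = ∫ p in Set.Ioi (0 : ℝ), p * f p)
    (hF : ∀ b : ℝ, F b = ∫ p in (0 : ℝ)..b, f p)
    (hG : ∀ b : ℝ, G b = ∫ p in (0 : ℝ)..b, p * f p)
    (hlam : 0 < lam) :
    StrictMonoOn G (Set.Ici 0) ∧ ContinuousOn G (Set.Ici 0) ∧
      Set.BijOn G (Set.Ici 0) (Set.Ico 0 mbar) ∧
      ∀ Ginv : ℝ → ℝ,
        (∀ a ∈ Set.Ico (0 : ℝ) mbar, Ginv a ∈ Set.Ici (0 : ℝ) ∧ G (Ginv a) = a) →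
        StrictConvexOn ℝ (Set.Ico 0 (lam * mbar))
            (fun a : ℝ => -lam * F (Ginv (a / lam))) ∧
          ∀ a ∈ Set.Ioo (0 : ℝ) (lam * mbar),
            HasDerivAt (fun a' : ℝ => -lam * F (Ginv (a' / lam)))
              (-1 / Ginv (a / lam)) a :=
  stmt_5_general f F G mbar lam hf_cont hf_pos hmean_int hmbar hF hG hlam
end

section
/- For every x ∈ ℝ, the Legendre–Fenchel transform of L satisfies sup over a ∈ [0, λ m̄] of (x a - L(a)) = H(x). -/
/-!
Write `Φ(b) = x G(b) + F(b) = ∫₀ᵇ (x p + 1) f(p) dp`. Substituting `a = λ G(b)` turns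
`x a - L(a)` into `λ Φ(b)` on `[0, λ m̄)`, and the endpoint `a = λ m̄` contributes
`λ (x m̄ + 1) = λ Φ(∞)`. For `x ≥ 0`, `F ≤ 1` and `G < m̄` give `Φ ≤ x m̄ + 1`, so the
supremum is attained at the endpoint. For `x < 0` the integrand `(x p + 1) f(p)` changes sign
exactly at `p = -1/x`, so `Φ` is maximised on `[0, ∞]` there, and integrating `F` by parts
gives `λ Φ(-1/x) = H(x)`.
-/

open MeasureTheory Set

theorem intervalIntegral_le_of_sign_change {g : ℝ → ℝ} {c : ℝ} (hg : Continuous g)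
    (hg_nonneg : ∀ p ≤ c, 0 ≤ g p) (hg_nonpos : ∀ p, c ≤ p → g p ≤ 0) (a b : ℝ) :
    ∫ p in a..b, g p ≤ ∫ p in a..c, g p := by
  have hsplit : ∫ p in a..b, g p = (∫ p in a..c, g p) + ∫ p in c..b, g p :=
    (intervalIntegral.integral_add_adjacent_intervals
      (hg.intervalIntegrable a c) (hg.intervalIntegrable c b)).symm
  suffices ∫ p in c..b, g p ≤ 0 by linarith
  rcases le_total c b with hcb | hbc
  · rw [← neg_nonneg, ← intervalIntegral.integral_neg]
    exact intervalIntegral.integral_nonneg hcb fun p hp => neg_nonneg.2 (hg_nonpos p hp.1)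
  · rw [intervalIntegral.integral_symm, neg_nonpos]
    exact intervalIntegral.integral_nonneg hbc fun p hp => hg_nonneg p hp.2

theorem setIntegral_Ioi_le_of_nonpos_Ioi {g : ℝ → ℝ} {a c : ℝ} (hg : IntegrableOn g (Ioi a))
    (hac : a ≤ c) (hg_nonpos : ∀ p, c < p → g p ≤ 0) :
    ∫ p in Ioi a, g p ≤ ∫ p in a..c, g p := by
  rw [← intervalIntegral.integral_interval_add_Ioi hg (hg.mono_set (Ioi_subset_Ioi hac))]
  linarith [setIntegral_nonpos (μ := volume) measurableSet_Ioi
    fun p (hp : c < p) => hg_nonpos p hp]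

theorem intervalIntegral_le_setIntegral_Ioi {g : ℝ → ℝ} {a b : ℝ}
    (hg : IntegrableOn g (Ioi a)) (hab : a ≤ b) (hg_nonneg : ∀ p, 0 ≤ g p) :
    ∫ p in a..b, g p ≤ ∫ p in Ioi a, g p := by
  rw [← intervalIntegral.integral_interval_add_Ioi hg (hg.mono_set (Ioi_subset_Ioi hab))]
  linarith [setIntegral_nonneg (μ := volume) measurableSet_Ioi fun p (_ : b < p) => hg_nonneg p]

theorem integral_primitive_eq {f : ℝ → ℝ} (hf : Continuous f) (a b : ℝ) :
    ∫ u in a..b, (∫ p in a..u, f p) = b * (∫ p in a..b, f p) - ∫ p in a..b, p * f p := by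
  have hparts := intervalIntegral.integral_mul_deriv_eq_deriv_mul
    (u := fun u => ∫ p in a..u, f p) (v := id) (v' := fun _ => 1)
    (fun u _ => (hf.integral_hasStrictDerivAt a u).hasDerivAt) (fun u _ => hasDerivAt_id u)
    (hf.intervalIntegrable a b) intervalIntegrable_const
  simp only [mul_one, id, intervalIntegral.integral_same, zero_mul, sub_zero] at hparts
  rw [hparts, mul_comm b]
  simp_rw [mul_comm (f _)]

section Density

variable {f : ℝ → ℝ} {x : ℝ}

theorem intervalIntegral_mul_add_one_mul (hf : Continuous f) (a b : ℝ) :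
    ∫ p in a..b, (x * p + 1) * f p = x * (∫ p in a..b, p * f p) + ∫ p in a..b, f p := by
  simp_rw [add_mul, one_mul, mul_assoc]
  have hpf : Continuous fun p => x * (p * f p) := by fun_prop
  rw [intervalIntegral.integral_add (hpf.intervalIntegrable a b) (hf.intervalIntegrable a b),
    intervalIntegral.integral_const_mul]

theorem setIntegral_Ioi_mul_add_one_mul {a : ℝ} (hf : IntegrableOn f (Ioi a))
    (hpf : IntegrableOn (fun p => p * f p) (Ioi a)) :
    ∫ p in Ioi a, (x * p + 1) * f p = x * (∫ p in Ioi a, p * f p) + ∫ p in Ioi a, f p := by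
  simp_rw [add_mul, one_mul, mul_assoc]
  rw [integral_add (hpf.const_mul x) hf, integral_const_mul]

theorem intervalIntegral_mul_add_one_mul_le (hf : Continuous f) (hf_nonneg : ∀ p, 0 ≤ f p)
    (hx : x < 0) (a b : ℝ) :
    ∫ p in a..b, (x * p + 1) * f p ≤ ∫ p in a..(-1 / x), (x * p + 1) * f p :=
  intervalIntegral_le_of_sign_change (by fun_prop)
    (fun p hp => mul_nonneg (by rw [le_div_iff_of_neg hx] at hp; linarith) (hf_nonneg p))
    (fun p hp => mul_nonpos_of_nonpos_of_nonneg (by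
      rw [div_le_iff_of_neg hx] at hp; linarith) (hf_nonneg p)) a b

theorem setIntegral_Ioi_mul_add_one_mul_le (hf : IntegrableOn f (Ioi 0))
    (hpf : IntegrableOn (fun p => p * f p) (Ioi 0)) (hf_nonneg : ∀ p, 0 ≤ f p) (hx : x < 0) :
    ∫ p in Ioi 0, (x * p + 1) * f p ≤ ∫ p in 0..(-1 / x), (x * p + 1) * f p := by
  refine setIntegral_Ioi_le_of_nonpos_Ioi ?_ (div_pos_of_neg_of_neg (by norm_num) hx).le
    fun p hp => mul_nonpos_of_nonpos_of_nonneg ?_ (hf_nonneg p)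
  · simp_rw [add_mul, one_mul, mul_assoc]
    exact (hpf.const_mul x).add hf
  · rw [div_lt_iff_of_neg hx] at hp; linarith

end Density

section Legendre

variable {F G L Ginv : ℝ → ℝ} {mbar lam x : ℝ}

theorem div_mem_Ico_of_mem_Ico (hlam : 0 < lam) {a : ℝ} (ha : a ∈ Ico 0 (lam * mbar)) :
    a / lam ∈ Ico 0 mbar :=
  ⟨div_nonneg ha.1 hlam.le, (div_lt_iff₀' hlam).2 ha.2⟩

theorem sub_apply_eq_of_mem_Ico (hlam : 0 < lam)
    (hGinv : ∀ a ∈ Ico (0 : ℝ) mbar, Ginv a ∈ Ici (0 : ℝ) ∧ G (Ginv a) = a)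
    (hL : ∀ a ∈ Ico (0 : ℝ) (lam * mbar), L a = -lam * F (Ginv (a / lam)))
    {a : ℝ} (ha : a ∈ Ico 0 (lam * mbar)) :
    x * a - L a = lam * (x * G (Ginv (a / lam)) + F (Ginv (a / lam))) := by
  rw [hL a ha, (hGinv _ (div_mem_Ico_of_mem_Ico hlam ha)).2]
  field_simp
  ring

theorem isGreatest_image_sub_apply (hlam : 0 < lam) (hGbij : BijOn G (Ici 0) (Ico 0 mbar))
    (hGinv : ∀ a ∈ Ico (0 : ℝ) mbar, Ginv a ∈ Ici (0 : ℝ) ∧ G (Ginv a) = a)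
    (hL : ∀ a ∈ Ico (0 : ℝ) (lam * mbar), L a = -lam * F (Ginv (a / lam)))
    (hLend : L (lam * mbar) = -lam) {M : ℝ} (hM : ∀ b, 0 ≤ b → x * G b + F b ≤ M)
    (hM_end : x * mbar + 1 ≤ M)
    (hM_attained : x * mbar + 1 = M ∨ ∃ b, 0 ≤ b ∧ x * G b + F b = M) :
    IsGreatest ((fun a => x * a - L a) '' Icc 0 (lam * mbar)) (lam * M) := by
  have hG_mem : ∀ b, 0 ≤ b → lam * G b ∈ Ico 0 (lam * mbar) := fun b hb =>
    have h := hGbij.mapsTo (mem_Ici.2 hb)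
    ⟨mul_nonneg hlam.le h.1, mul_lt_mul_of_pos_left h.2 hlam⟩
  have hend_value : x * (lam * mbar) - L (lam * mbar) = lam * (x * mbar + 1) := by
    rw [hLend]; ring
  refine ⟨?_, ?_⟩
  · rcases hM_attained with rfl | ⟨b, hb, rfl⟩
    · have hend_nonneg : 0 ≤ lam * mbar := (hG_mem 0 le_rfl).1.trans (hG_mem 0 le_rfl).2.le
      exact ⟨lam * mbar, ⟨hend_nonneg, le_rfl⟩, hend_value⟩
    · refine ⟨lam * G b, Ico_subset_Icc_self (hG_mem b hb), ?_⟩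
      have hGinv_G : Ginv (lam * G b / lam) = b := by
        rw [mul_div_cancel_left₀ _ hlam.ne']
        have h := hGinv (G b) (hGbij.mapsTo (mem_Ici.2 hb))
        exact hGbij.injOn h.1 (mem_Ici.2 hb) h.2
      simp only
      rw [sub_apply_eq_of_mem_Ico hlam hGinv hL (hG_mem b hb), hGinv_G]
  · rintro _ ⟨a, ha, rfl⟩
    rcases eq_or_lt_of_le ha.2 with rfl | hlt
    · simp only [hend_value]
      exact mul_le_mul_of_nonneg_left hM_end hlam.le
    · have ha' : a ∈ Ico 0 (lam * mbar) := ⟨ha.1, hlt⟩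
      simp only
      rw [sub_apply_eq_of_mem_Ico hlam hGinv hL ha']
      exact mul_le_mul_of_nonneg_left
        (hM _ (hGinv _ (div_mem_Ico_of_mem_Ico hlam ha')).1) hlam.le

end Legendre

theorem stmt_6_general (f F G H L Ginv : ℝ → ℝ) (mbar lam : ℝ)
    (hf_cont : Continuous f)
    (hf_nonpos : ∀ p ≤ (0 : ℝ), f p = 0)
    (hf_pos : ∀ p : ℝ, 0 < p → 0 < f p)
    (hf_int : (∫ p in Set.Ioi (0 : ℝ), f p) = 1)
    (hmean_int : MeasureTheory.IntegrableOn (fun p : ℝ => p * f p) (Set.Ioi 0))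
    (hmbar : mbar = ∫ p in Set.Ioi (0 : ℝ), p * f p)
    (hF : ∀ b : ℝ, F b = ∫ p in (0 : ℝ)..b, f p)
    (hG : ∀ b : ℝ, G b = ∫ p in (0 : ℝ)..b, p * f p)
    (hlam : 0 < lam)
    (hGbij : Set.BijOn G (Set.Ici 0) (Set.Ico 0 mbar))
    (hGinv : ∀ a ∈ Set.Ico (0 : ℝ) mbar, Ginv a ∈ Set.Ici (0 : ℝ) ∧ G (Ginv a) = a)
    (hL : ∀ a ∈ Set.Ico (0 : ℝ) (lam * mbar), L a = -lam * F (Ginv (a / lam)))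
    (hLend : L (lam * mbar) = -lam)
    (hHneg : ∀ x < (0 : ℝ), H x = -(lam * x) * ∫ p in (0 : ℝ)..(-1 / x), F p)
    (hHpos : ∀ x : ℝ, 0 ≤ x → H x = lam * (1 + x * mbar))
    (x : ℝ) :
    sSup ((fun a : ℝ => x * a - L a) '' Set.Icc 0 (lam * mbar)) = H x := by
  have hf_nonneg : ∀ p, 0 ≤ f p := fun p =>
    (le_or_gt p 0).elim (fun hp => (hf_nonpos p hp).ge) fun hp => (hf_pos p hp).le
  have hf_integrable : IntegrableOn f (Ioi 0) :=
    Integrable.of_integral_ne_zero (by rw [hf_int]; exact one_ne_zero)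
  have hΦ : ∀ b, x * G b + F b = ∫ p in 0..b, (x * p + 1) * f p := fun b => by
    rw [hF, hG, intervalIntegral_mul_add_one_mul hf_cont]
  refine IsGreatest.csSup_eq ?_
  rcases lt_or_ge x 0 with hx | hx
  · have hH : H x = lam * (x * G (-1 / x) + F (-1 / x)) := by
      simp_rw [hHneg x hx, hF, integral_primitive_eq hf_cont, hG]
      field_simp [hx.ne]
      ring
    have hM_end : x * mbar + 1 ≤ x * G (-1 / x) + F (-1 / x) := by
      have h := setIntegral_Ioi_mul_add_one_mul (x := x) hf_integrable hmean_int
      rw [hf_int, ← hmbar] at h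
      rw [← h, hΦ]
      exact setIntegral_Ioi_mul_add_one_mul_le hf_integrable hmean_int hf_nonneg hx
    refine hH ▸ isGreatest_image_sub_apply hlam hGbij hGinv hL hLend (fun b _ => ?_) hM_end
      (Or.inr ⟨-1 / x, (div_pos_of_neg_of_neg (by norm_num) hx).le, rfl⟩)
    rw [hΦ, hΦ]
    exact intervalIntegral_mul_add_one_mul_le hf_cont hf_nonneg hx 0 b
  · have hM : ∀ b, 0 ≤ b → x * G b + F b ≤ x * mbar + 1 := fun b hb => by
      have hF_le : F b ≤ 1 :=
        hF b ▸ hf_int ▸ intervalIntegral_le_setIntegral_Ioi hf_integrable hb hf_nonneg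
      have hG_le : G b ≤ mbar := (hGbij.mapsTo (mem_Ici.2 hb)).2.le
      nlinarith
    rw [hHpos x hx, add_comm 1]
    exact isGreatest_image_sub_apply hlam hGbij hGinv hL hLend hM le_rfl (Or.inl rfl)

/-- For every `x ∈ ℝ`, the Legendre–Fenchel transform of `L` satisfies
`sup_{a ∈ [0, λ m̄]} (x a - L(a)) = H(x)`. -/
theorem stmt_6 (f F G H L Ginv : ℝ → ℝ) (mbar lam : ℝ)
    (hf_cont : Continuous f)
    (hf_nonpos : ∀ p ≤ (0 : ℝ), f p = 0)
    (hf_pos : ∀ p : ℝ, 0 < p → 0 < f p)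
    (hf_int : (∫ p in Set.Ioi (0 : ℝ), f p) = 1)
    (hf_tail : Filter.Tendsto (fun p : ℝ => p ^ 3 * f p) Filter.atTop (nhds 0))
    (hmean_int : MeasureTheory.IntegrableOn (fun p : ℝ => p * f p) (Set.Ioi 0))
    (hmbar : mbar = ∫ p in Set.Ioi (0 : ℝ), p * f p)
    (hF : ∀ b : ℝ, F b = ∫ p in (0 : ℝ)..b, f p)
    (hG : ∀ b : ℝ, G b = ∫ p in (0 : ℝ)..b, p * f p)
    (hlam : 0 < lam)
    (hGbij : Set.BijOn G (Set.Ici 0) (Set.Ico 0 mbar))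
    (hGinv : ∀ a ∈ Set.Ico (0 : ℝ) mbar, Ginv a ∈ Set.Ici (0 : ℝ) ∧ G (Ginv a) = a)
    (hL : ∀ a ∈ Set.Ico (0 : ℝ) (lam * mbar), L a = -lam * F (Ginv (a / lam)))
    (hLend : L (lam * mbar) = -lam)
    (hHneg : ∀ x < (0 : ℝ), H x = -(lam * x) * ∫ p in (0 : ℝ)..(-1 / x), F p)
    (hHpos : ∀ x : ℝ, 0 ≤ x → H x = lam * (1 + x * mbar))
    (x : ℝ) :
    sSup ((fun a : ℝ => x * a - L a) '' Set.Icc 0 (lam * mbar)) = H x :=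
  stmt_6_general f F G H L Ginv mbar lam hf_cont hf_nonpos hf_pos hf_int hmean_int hmbar hF hG hlam
    hGbij hGinv hL hLend hHneg hHpos x
end

section
/- Let K > 0, 0 ≤ t < T and S ∈ ℝ. The infimum over all measurable control functions b : [t,T] → [0,∞) of the quantity ( -λ ∫ₜ^T F(b(s)) ds + K·min( S - λ ∫ₜ^T G(b(s)) ds, 0)² ) equals the infimum over constant controls, i.e. the infimum over b ∈ [0,∞) of ( -λ (T-t) F(b) + K·min( S - λ (T-t) G(b), 0)² ). -/
open MeasureTheory Filter Set

/-- The infimum over all measurable controls `b : [t,T] → [0,∞)` of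
`-λ ∫ₜ^T F(b(s)) ds + K min(S - λ ∫ₜ^T G(b(s)) ds, 0)²` equals the infimum
over constant controls `b ∈ [0,∞)` of `-λ(T-t)F(b) + K min(S - λ(T-t)G(b), 0)²`. -/
theorem stmt_9 (f F G : ℝ → ℝ) (lam : ℝ)
    (hf_cont : Continuous f)
    (hf_nonpos : ∀ p ≤ (0 : ℝ), f p = 0)
    (hf_pos : ∀ p : ℝ, 0 < p → 0 < f p)
    (hf_int : (∫ p in Set.Ioi (0 : ℝ), f p) = 1)
    (hf_tail : Filter.Tendsto (fun p : ℝ => p ^ 3 * f p) Filter.atTop (nhds 0))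
    (hmean_int : MeasureTheory.IntegrableOn (fun p : ℝ => p * f p) (Set.Ioi 0))
    (hF : ∀ b : ℝ, F b = ∫ p in (0 : ℝ)..b, f p)
    (hG : ∀ b : ℝ, G b = ∫ p in (0 : ℝ)..b, p * f p)
    (hlam : 0 < lam)
    (K t T S : ℝ) (hK : 0 < K) (ht : 0 ≤ t) (htT : t < T) :
    sInf {v : ℝ | ∃ b : ℝ → ℝ, Measurable b ∧ (∀ s, 0 ≤ b s) ∧
        v = -lam * (∫ s in t..T, F (b s))
              + K * (min (S - lam * ∫ s in t..T, G (b s)) 0) ^ 2}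
      = sInf ((fun b : ℝ => -lam * (T - t) * F b
              + K * (min (S - lam * (T - t) * G b) 0) ^ 2) '' Set.Ici 0) := by
  -- Basic facts about f
  have hf0 : ∀ p, 0 ≤ f p := fun p => by
    rcases le_or_gt p 0 with h | h
    · exact (hf_nonpos p h).ge
    · exact (hf_pos p h).le
  have hg0 : ∀ q, 0 ≤ q * f q := fun q => by
    rcases le_or_gt q 0 with h | h
    · simp [hf_nonpos q h]
    · exact mul_nonneg h.le (hf0 q)
  have hfi : IntegrableOn f (Ioi (0:ℝ)) := by
    by_contra h
    rw [MeasureTheory.integral_undef h] at hf_int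
    norm_num at hf_int
  have hfI : ∀ a b : ℝ, IntervalIntegrable f volume a b := fun a b =>
    hf_cont.intervalIntegrable a b
  have hgI : ∀ a b : ℝ, IntervalIntegrable (fun q => q * f q) volume a b := fun a b =>
    (continuous_id.mul hf_cont).intervalIntegrable a b
  -- Continuity of F and G
  have hFc : Continuous F := by
    have : Continuous fun b => ∫ p in (0:ℝ)..b, f p :=
      intervalIntegral.continuous_primitive hfI 0
    exact this.congr fun b => (hF b).symm
  have hGc : Continuous G := by
    have : Continuous fun b => ∫ p in (0:ℝ)..b, p * f p :=
      intervalIntegral.continuous_primitive hgI 0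
    exact this.congr fun b => (hG b).symm
  have hF0 : F 0 = 0 := by rw [hF]; simp
  have hG0 : G 0 = 0 := by rw [hG]; simp
  -- differences as interval integrals
  have hFdiff : ∀ a b : ℝ, F b - F a = ∫ p in a..b, f p := by
    intro a b
    have := intervalIntegral.integral_add_adjacent_intervals (hfI 0 a) (hfI a b)
    rw [hF a, hF b]; linarith
  have hGdiff : ∀ a b : ℝ, G b - G a = ∫ p in a..b, p * f p := by
    intro a b
    have := intervalIntegral.integral_add_adjacent_intervals (hgI 0 a) (hgI a b)
    rw [hG a, hG b]; linarith
  have hFmono : ∀ a b : ℝ, a ≤ b → F a ≤ F b := by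
    intro a b hab
    have h2 : 0 ≤ ∫ p in a..b, f p :=
      intervalIntegral.integral_nonneg hab fun x _ => hf0 x
    have := hFdiff a b; linarith
  have hGmono : ∀ a b : ℝ, a ≤ b → G a ≤ G b := by
    intro a b hab
    have h2 : 0 ≤ ∫ p in a..b, p * f p :=
      intervalIntegral.integral_nonneg hab fun x _ => hg0 x
    have := hGdiff a b; linarith
  have hFnn : ∀ p, 0 ≤ p → 0 ≤ F p := fun p hp => hF0 ▸ hFmono 0 p hp
  have hGnn : ∀ p, 0 ≤ p → 0 ≤ G p := fun p hp => hG0 ▸ hGmono 0 p hp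
  -- F < 1
  have hFlt1 : ∀ p, 0 ≤ p → F p < 1 := by
    intro p hp
    have hsplit : (∫ x in Ioc 0 p, f x) + ∫ x in Ioi p, f x = ∫ x in Ioi (0:ℝ), f x := by
      rw [← MeasureTheory.setIntegral_union Set.Ioc_disjoint_Ioi_same measurableSet_Ioi
        (hfi.mono_set Set.Ioc_subset_Ioi_self)
        (hfi.mono_set (Set.Ioi_subset_Ioi hp)), Set.Ioc_union_Ioi_eq_Ioi hp]
    have hpos : 0 < ∫ x in Ioi p, f x := by
      rw [MeasureTheory.setIntegral_pos_iff_support_of_nonneg_ae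
        (Filter.Eventually.of_forall fun x => hf0 x) (hfi.mono_set (Set.Ioi_subset_Ioi hp))]
      have hsub : Ioi p ⊆ Function.support f ∩ Ioi p := fun x hx =>
        ⟨Function.mem_support.2 (hf_pos x (lt_of_le_of_lt hp hx)).ne', hx⟩
      calc (0:ENNReal) < volume (Ioi p) := by simp [Real.volume_Ioi]
        _ ≤ volume (Function.support f ∩ Ioi p) := measure_mono hsub
    have hFp : F p = ∫ x in Ioc 0 p, f x := by
      rw [hF, intervalIntegral.integral_of_le hp]
    rw [hFp]
    rw [hf_int] at hsplit
    linarith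
  -- F tends to 1
  have hFtend : Tendsto F atTop (nhds 1) := by
    have h1 : Tendsto (fun b : ℝ => ∫ p in (0:ℝ)..b, f p) atTop
        (nhds (∫ p in Ioi (0:ℝ), f p)) :=
      MeasureTheory.intervalIntegral_tendsto_integral_Ioi 0 hfi tendsto_id
    rw [hf_int] at h1
    exact h1.congr fun b => (hF b).symm
  -- G bounded by the mean
  set m : ℝ := ∫ p in Ioi (0:ℝ), p * f p with hm
  have hGbd : ∀ p, 0 ≤ p → G p ≤ m := by
    intro p hp
    have hGp : G p = ∫ x in Ioc 0 p, x * f x := by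
      rw [hG, intervalIntegral.integral_of_le hp]
    rw [hGp, hm]
    exact MeasureTheory.setIntegral_mono_set hmean_int
      (Filter.Eventually.of_forall fun x => hg0 x)
      (Filter.Eventually.of_forall fun x hx => Set.Ioc_subset_Ioi_self hx)
  -- key convexity inequality
  have hkey : ∀ β p : ℝ, 0 ≤ β → G β + β * (F p - F β) ≤ G p := by
    intro β p hβ
    rw [hFdiff β p]
    have hsub : G p - G β = ∫ q in β..p, q * f q := hGdiff β p
    have hcm : ∀ a b : ℝ, β * ∫ q in a..b, f q = ∫ q in a..b, β * f q := fun a b =>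
      (intervalIntegral.integral_const_mul β f).symm
    have hkey2 : 0 ≤ ∫ q in β..p, (q - β) * f q := by
      rcases le_total β p with h | h
      · apply intervalIntegral.integral_nonneg h
        intro u hu
        exact mul_nonneg (by linarith [hu.1]) (hf0 u)
      · rw [intervalIntegral.integral_symm]
        have : 0 ≤ ∫ q in p..β, -((q - β) * f q) := by
          apply intervalIntegral.integral_nonneg h
          intro u hu
          have : (u - β) * f u ≤ 0 := mul_nonpos_of_nonpos_of_nonneg (by linarith [hu.2]) (hf0 u)
          linarith
        rw [intervalIntegral.integral_neg] at this
        linarith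
    have hexp : ∫ q in β..p, (q - β) * f q
        = (∫ q in β..p, q * f q) - β * ∫ q in β..p, f q := by
      rw [hcm]
      rw [← intervalIntegral.integral_sub (hgI β p) ((hfI β p).const_mul β)]
      congr 1
      ext q
      ring
    rw [hexp] at hkey2
    linarith
  set c : ℝ := T - t with hc
  have hcpos : 0 < c := by simp [hc]; linarith
  set Φ : ℝ → ℝ := fun b : ℝ => -lam * (T - t) * F b
              + K * (min (S - lam * (T - t) * G b) 0) ^ 2 with hΦ
  set A : Set ℝ := {v : ℝ | ∃ b : ℝ → ℝ, Measurable b ∧ (∀ s, 0 ≤ b s) ∧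
        v = -lam * (∫ s in t..T, F (b s))
              + K * (min (S - lam * ∫ s in t..T, G (b s)) 0) ^ 2} with hA
  set B : Set ℝ := Φ '' Set.Ici 0 with hB
  -- integrability of compositions
  have hcomp : ∀ (φ : ℝ → ℝ) (C : ℝ), Continuous φ → (∀ p, 0 ≤ p → |φ p| ≤ C) →
      ∀ (b : ℝ → ℝ), Measurable b → (∀ s, 0 ≤ b s) →
      IntervalIntegrable (fun s => φ (b s)) volume t T := by
    intro φ C hφc hφbd b hbm hbn
    apply IntervalIntegrable.mono_fun' (g := fun _ => C) intervalIntegrable_const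
    · exact (hφc.measurable.comp hbm).aestronglyMeasurable
    · exact Filter.Eventually.of_forall fun s => hφbd (b s) (hbn s)
  -- B ⊆ A
  have hBA : B ⊆ A := by
    rintro v ⟨b, hb, rfl⟩
    refine ⟨fun _ => b, measurable_const, fun _ => hb, ?_⟩
    rw [intervalIntegral.integral_const, intervalIntegral.integral_const]
    simp [Φ, smul_eq_mul]
    ring_nf
  have hBne : B.Nonempty := ⟨Φ 0, 0, Set.self_mem_Ici, rfl⟩
  have hAne : A.Nonempty := hBne.mono hBA
  -- lower bound
  have hlb : ∀ v ∈ A, -lam * (T - t) ≤ v := by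
    rintro v ⟨b, hbm, hbn, rfl⟩
    have hFint : IntervalIntegrable (fun s => F (b s)) volume t T :=
      hcomp F 1 hFc (fun p hp => by rw [abs_of_nonneg (hFnn p hp)]; exact (hFlt1 p hp).le)
        b hbm hbn
    have h1 : (∫ s in t..T, F (b s)) ≤ ∫ s in t..T, (1:ℝ) := by
      apply intervalIntegral.integral_mono_on htT.le hFint intervalIntegrable_const
      intro s _
      exact (hFlt1 (b s) (hbn s)).le
    rw [intervalIntegral.integral_const, smul_eq_mul, mul_one] at h1
    have h2 : 0 ≤ K * (min (S - lam * ∫ s in t..T, G (b s)) 0) ^ 2 :=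
      mul_nonneg hK.le (sq_nonneg _)
    nlinarith
  have hAbdd : BddBelow A := ⟨-lam * (T - t), fun v hv => hlb v hv⟩
  have hBbdd : BddBelow B := hAbdd.mono hBA
  apply le_antisymm
  · exact csInf_le_csInf hAbdd hBne hBA
  · -- sInf B ≤ sInf A : every v ∈ A dominates some element of B
    apply le_csInf hAne
    rintro v ⟨b, hbm, hbn, rfl⟩
    have hFint : IntervalIntegrable (fun s => F (b s)) volume t T :=
      hcomp F 1 hFc (fun p hp => by rw [abs_of_nonneg (hFnn p hp)]; exact (hFlt1 p hp).le)
        b hbm hbn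
    have hGint : IntervalIntegrable (fun s => G (b s)) volume t T :=
      hcomp G m hGc (fun p hp => by rw [abs_of_nonneg (hGnn p hp)]; exact hGbd p hp) b hbm hbn
    set IF : ℝ := ∫ s in t..T, F (b s) with hIF
    set IG : ℝ := ∫ s in t..T, G (b s) with hIG
    have hIFnn : 0 ≤ IF :=
      intervalIntegral.integral_nonneg htT.le fun s _ => hFnn (b s) (hbn s)
    have hIFlt : IF < c := by
      have h1 : 0 < ∫ s in t..T, (1 - F (b s)) := by
        apply intervalIntegral.intervalIntegral_pos_of_pos_on
        · exact intervalIntegrable_const.sub hFint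
        · intro s _
          have := hFlt1 (b s) (hbn s); linarith
        · exact htT
      have h2 : (∫ s in t..T, (1 - F (b s))) = (T - t) - IF := by
        rw [intervalIntegral.integral_sub intervalIntegrable_const hFint,
          intervalIntegral.integral_const, smul_eq_mul, mul_one]
      rw [h2] at h1
      simp only [hc]; linarith
    -- find the constant control b*
    set x : ℝ := IF / c with hx
    have hx0 : 0 ≤ x := div_nonneg hIFnn hcpos.le
    have hx1 : x < 1 := (div_lt_one hcpos).2 hIFlt
    obtain ⟨N, hN⟩ := ((hFtend.eventually (eventually_ge_nhds hx1)).and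
      (eventually_ge_atTop (0:ℝ))).exists
    obtain ⟨β, hβmem, hβ⟩ : ∃ β ∈ Set.Icc (0:ℝ) N, F β = x := by
      have := intermediate_value_Icc hN.2 hFc.continuousOn
      exact this ⟨by rw [hF0]; exact hx0, hN.1⟩
    have hβ0 : 0 ≤ β := hβmem.1
    have hIFeq : IF = c * F β := by
      rw [hβ, hx]; field_simp
    -- integral comparison for G
    have hIGge : c * G β ≤ IG := by
      have h1 : (∫ s in t..T, (G β + β * (F (b s) - F β))) ≤ IG := by
        apply intervalIntegral.integral_mono_on htT.le _ hGint
        · intro s _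
          exact hkey β (b s) hβ0
        · exact intervalIntegrable_const.add (((hFint.sub intervalIntegrable_const)).const_mul β)
      have h2 : (∫ s in t..T, (G β + β * (F (b s) - F β)))
          = (T - t) * G β + β * (IF - (T - t) * F β) := by
        rw [intervalIntegral.integral_add intervalIntegrable_const
          ((hFint.sub intervalIntegrable_const).const_mul β),
          intervalIntegral.integral_const, intervalIntegral.integral_const_mul,
          intervalIntegral.integral_sub hFint intervalIntegrable_const,
          intervalIntegral.integral_const]
        simp only [smul_eq_mul]
        try ring
      rw [h2, hIFeq] at h1
      simp only [hc] at h1 ⊢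
      linarith
    -- conclude
    have hwmem : Φ β ∈ B := ⟨β, hβ0, rfl⟩
    have hineq : Φ β ≤ -lam * IF + K * (min (S - lam * IG) 0) ^ 2 := by
      have hterm1 : -lam * (T - t) * F β = -lam * IF := by rw [hIFeq, hc]; ring
      have hmin : min (S - lam * IG) 0 ≤ min (S - lam * (T - t) * G β) 0 := by
        apply min_le_min _ le_rfl
        have : lam * (c * G β) ≤ lam * IG := by
          exact mul_le_mul_of_nonneg_left hIGge hlam.le
        simp only [hc] at this ⊢
        nlinarith
      have h0 : min (S - lam * (T - t) * G β) 0 ≤ 0 := min_le_right _ _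
      have hsq : (min (S - lam * (T - t) * G β) 0) ^ 2 ≤ (min (S - lam * IG) 0) ^ 2 := by
        nlinarith
      simp only [hΦ]
      rw [hterm1]
      nlinarith
    exact le_trans (csInf_le hBbdd hwmem) hineq
end

section
/- Let K > 0, 0 ≤ t < T and S ∈ ℝ. The infimum over b ∈ [0,∞) of ( -λ (T-t) F(b) + K·min( S - λ (T-t) G(b), 0)² ) equals the supremum over x ∈ (-∞,0] of ( S x - (T-t) H(x) - x²/(4K) ). -/
open MeasureTheory Filter Set

/-- The infimum over `b ∈ [0,∞)` of `-λ(T-t)F(b) + K min(S - λ(T-t)G(b), 0)²`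
equals the supremum over `x ∈ (-∞,0]` of `S x - (T-t)H(x) - x²/(4K)`. -/
theorem stmt_10 (f F G H : ℝ → ℝ) (mbar lam : ℝ)
    (hf_cont : Continuous f)
    (hf_nonpos : ∀ p ≤ (0 : ℝ), f p = 0)
    (hf_pos : ∀ p : ℝ, 0 < p → 0 < f p)
    (hf_int : (∫ p in Set.Ioi (0 : ℝ), f p) = 1)
    (hf_tail : Filter.Tendsto (fun p : ℝ => p ^ 3 * f p) Filter.atTop (nhds 0))
    (hmean_int : MeasureTheory.IntegrableOn (fun p : ℝ => p * f p) (Set.Ioi 0))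
    (hmbar : mbar = ∫ p in Set.Ioi (0 : ℝ), p * f p)
    (hF : ∀ b : ℝ, F b = ∫ p in (0 : ℝ)..b, f p)
    (hG : ∀ b : ℝ, G b = ∫ p in (0 : ℝ)..b, p * f p)
    (hlam : 0 < lam)
    (hHneg : ∀ x < (0 : ℝ), H x = -(lam * x) * ∫ p in (0 : ℝ)..(-1 / x), F p)
    (hHpos : ∀ x : ℝ, 0 ≤ x → H x = lam * (1 + x * mbar))
    (K t T S : ℝ) (hK : 0 < K) (ht : 0 ≤ t) (htT : t < T) :
    sInf ((fun b : ℝ => -lam * (T - t) * F b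
            + K * (min (S - lam * (T - t) * G b) 0) ^ 2) '' Set.Ici 0)
      = sSup ((fun x : ℝ => S * x - (T - t) * H x - x ^ 2 / (4 * K)) '' Set.Iic 0) := by
  have hτ : (0:ℝ) < T - t := sub_pos.mpr htT
  have hf0 : ∀ p : ℝ, 0 ≤ f p := fun p => by
    rcases le_or_gt p 0 with h | h
    · simp [hf_nonpos p h]
    · exact (hf_pos p h).le
  have hfi : IntegrableOn f (Set.Ioi (0:ℝ)) := by
    by_contra h
    rw [MeasureTheory.integral_undef h] at hf_int; norm_num at hf_int
  have hgc : Continuous (fun p : ℝ => p * f p) := continuous_id.mul hf_cont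
  -- derivatives of F and G
  have hFd : ∀ p : ℝ, HasDerivAt F (f p) p := by
    intro p
    have h : HasDerivAt (fun b => ∫ q in (0:ℝ)..b, f q) (f p) p :=
      intervalIntegral.integral_hasDerivAt_right (hf_cont.intervalIntegrable _ _)
        hf_cont.stronglyMeasurable.stronglyMeasurableAtFilter hf_cont.continuousAt
    exact (funext hF : F = _) ▸ h
  have hGd : ∀ p : ℝ, HasDerivAt G (p * f p) p := by
    intro p
    have h : HasDerivAt (fun b => ∫ q in (0:ℝ)..b, q * f q) (p * f p) p :=
      intervalIntegral.integral_hasDerivAt_right (hgc.intervalIntegrable _ _)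
        hgc.stronglyMeasurable.stronglyMeasurableAtFilter hgc.continuousAt
    exact (funext hG : G = _) ▸ h
  have hFc : Continuous F :=
    continuous_iff_continuousAt.mpr fun p => (hFd p).differentiableAt.continuousAt
  have hGc : Continuous G :=
    continuous_iff_continuousAt.mpr fun p => (hGd p).differentiableAt.continuousAt
  have hF0 : F 0 = 0 := by simp [hF]
  -- F ≤ 1 on [0,∞)
  have hF1 : ∀ b : ℝ, 0 ≤ b → F b ≤ 1 := by
    intro b hb
    rw [hF, intervalIntegral.integral_of_le hb, ← hf_int]
    exact setIntegral_mono_set hfi (Filter.Eventually.of_forall hf0)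
      (HasSubset.Subset.eventuallyLE Set.Ioc_subset_Ioi_self)
  -- integration by parts
  have hparts : ∀ c : ℝ, (∫ p in (0:ℝ)..c, F p) = c * F c - G c := by
    intro c
    have h := intervalIntegral.integral_mul_deriv_eq_deriv_mul
      (u := F) (u' := f) (v := fun p => p) (v' := fun _ => (1:ℝ))
      (fun x _ => hFd x) (fun x _ => hasDerivAt_id x)
      (hf_cont.intervalIntegrable 0 c) intervalIntegrable_const
    have h2 : (∫ p in (0:ℝ)..c, f p * p) = G c := by
      rw [hG]; exact intervalIntegral.integral_congr fun x _ => mul_comm _ _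
    simp only [mul_one, hF0, mul_zero, zero_mul, sub_zero, h2] at h
    rw [h]; ring
  -- H for x < 0
  have hHx : ∀ x : ℝ, x < 0 → H x = lam * (F (-1/x) + x * G (-1/x)) := by
    intro x hx
    have hx0 : x ≠ 0 := ne_of_lt hx
    rw [hHneg x hx, hparts]
    field_simp
    ring
  -- maximality of b = -1/x for x < 0
  have hmono : ∀ x : ℝ, x < 0 → ∀ b : ℝ, 0 ≤ b →
      x * G b + F b ≤ x * G (-1/x) + F (-1/x) := by
    intro x hx b hb
    have hx0 : x ≠ 0 := ne_of_lt hx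
    have hxc : x * (-1/x) = -1 := by field_simp
    have hcpos : 0 < -1/x := div_pos_iff.mpr (Or.inr ⟨by norm_num, hx⟩)
    have key : ∀ a : ℝ, x * G a + F a = ∫ p in (0:ℝ)..a, (x*p+1) * f p := by
      intro a
      rw [hG, hF, ← intervalIntegral.integral_const_mul, ← intervalIntegral.integral_add
        ((hgc.intervalIntegrable _ _).const_mul x) (hf_cont.intervalIntegrable _ _)]
      exact intervalIntegral.integral_congr fun p _ => by ring
    rw [key b, key (-1/x)]
    have hcontc : Continuous (fun p : ℝ => (x*p+1) * f p) :=
      ((continuous_const.mul continuous_id).add continuous_const).mul hf_cont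
    have hadj : (∫ p in (0:ℝ)..b, (x*p+1)*f p) + (∫ p in b..(-1/x), (x*p+1)*f p)
        = ∫ p in (0:ℝ)..(-1/x), (x*p+1)*f p :=
      intervalIntegral.integral_add_adjacent_intervals
        (hcontc.intervalIntegrable _ _) (hcontc.intervalIntegrable _ _)
    rw [← hadj]
    have hnn : 0 ≤ ∫ p in b..(-1/x), (x*p+1)*f p := by
      rcases le_total b (-1/x) with h | h
      · apply intervalIntegral.integral_nonneg h
        intro u hu
        have h1 : 0 ≤ x*u+1 := by
          nlinarith [mul_nonneg (neg_nonneg.mpr hx.le) (sub_nonneg.mpr hu.2)]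
        exact mul_nonneg h1 (hf0 u)
      · rw [intervalIntegral.integral_symm, ← intervalIntegral.integral_neg]
        apply intervalIntegral.integral_nonneg h
        intro u hu
        have h1 : x*u+1 ≤ 0 := by
          nlinarith [mul_nonneg (neg_nonneg.mpr hx.le) (sub_nonneg.mpr hu.1)]
        exact neg_nonneg.mpr (mul_nonpos_of_nonpos_of_nonneg h1 (hf0 u))
    linarith
  -- Fenchel pointwise inequality
  have hpt : ∀ x : ℝ, x ≤ 0 → ∀ y : ℝ, x*y - x^2/(4*K) ≤ K * (min y 0)^2 := by
    intro x hx y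
    have hd : 4*K*(x^2/(4*K)) = x^2 := by field_simp
    rcases le_or_gt 0 y with h | h
    · rw [min_eq_right h]
      have h1 : x * y ≤ 0 := mul_nonpos_of_nonpos_of_nonneg hx h
      have h2 : 0 ≤ x^2/(4*K) := by positivity
      nlinarith
    · rw [min_eq_left h.le]
      nlinarith [sq_nonneg (2*K*y - x), hK]
  -- weak duality
  have hweak : ∀ x : ℝ, x ≤ 0 → ∀ b : ℝ, 0 ≤ b →
      S*x - (T-t)*H x - x^2/(4*K)
        ≤ -lam*(T-t)*F b + K*(min (S - lam*(T-t)*G b) 0)^2 := by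
    intro x hx b hb
    rcases eq_or_lt_of_le hx with rfl | hx'
    · rw [hHpos 0 le_rfl]
      have h0 : S * 0 - (T-t)*(lam*(1+0*mbar)) - (0:ℝ)^2/(4*K) = -(lam*(T-t)) := by
        field_simp; ring
      rw [h0]
      have h1 := hF1 b hb
      have h2 : 0 ≤ K*(min (S - lam*(T-t)*G b) 0)^2 := by positivity
      have h3 : 0 < lam*(T-t) := mul_pos hlam hτ
      nlinarith [mul_le_mul_of_nonneg_left h1 h3.le]
    · have hmon := hmono x hx' b hb
      have hpt' := hpt x hx (S - lam*(T-t)*G b)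
      rw [hHx x hx']
      nlinarith [mul_le_mul_of_nonneg_left hmon (mul_pos hlam hτ).le]
  -- nonemptiness and boundedness
  have hAmem : ∀ b : ℝ, 0 ≤ b → (-lam*(T-t)*F b + K*(min (S - lam*(T-t)*G b) 0)^2)
      ∈ ((fun b : ℝ => -lam * (T - t) * F b
            + K * (min (S - lam * (T - t) * G b) 0) ^ 2) '' Set.Ici 0) :=
    fun b hb => ⟨b, hb, rfl⟩
  have hBmem : ∀ x : ℝ, x ≤ 0 → (S*x - (T-t)*H x - x^2/(4*K))
      ∈ ((fun x : ℝ => S * x - (T - t) * H x - x ^ 2 / (4 * K)) '' Set.Iic 0) :=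
    fun x hx => ⟨x, hx, rfl⟩
  have hAne : ((fun b : ℝ => -lam * (T - t) * F b
            + K * (min (S - lam * (T - t) * G b) 0) ^ 2) '' Set.Ici 0).Nonempty :=
    ⟨_, hAmem 0 le_rfl⟩
  have hBne : ((fun x : ℝ => S * x - (T - t) * H x - x ^ 2 / (4 * K)) '' Set.Iic 0).Nonempty :=
    ⟨_, hBmem 0 le_rfl⟩
  have hbddA : BddBelow ((fun b : ℝ => -lam * (T - t) * F b
            + K * (min (S - lam * (T - t) * G b) 0) ^ 2) '' Set.Ici 0) := by
    refine ⟨-lam*(T-t), ?_⟩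
    rintro a ⟨b, hb, rfl⟩
    show -lam*(T-t) ≤ -lam * (T - t) * F b + K * (min (S - lam * (T - t) * G b) 0) ^ 2
    have h1 := hF1 b hb
    have h2 : 0 ≤ K*(min (S - lam*(T-t)*G b) 0)^2 := by positivity
    have h3 : 0 < lam*(T-t) := mul_pos hlam hτ
    nlinarith [mul_le_mul_of_nonneg_left h1 h3.le]
  have hbddB : BddAbove ((fun x : ℝ => S * x - (T - t) * H x - x ^ 2 / (4 * K)) '' Set.Iic 0) := by
    refine ⟨-lam*(T-t)*F 0 + K*(min (S - lam*(T-t)*G 0) 0)^2, ?_⟩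
    rintro ψ ⟨x, hx, rfl⟩
    exact hweak x hx 0 le_rfl
  -- sup ≤ inf (weak duality)
  have hsle : sSup ((fun x : ℝ => S * x - (T - t) * H x - x ^ 2 / (4 * K)) '' Set.Iic 0)
      ≤ sInf ((fun b : ℝ => -lam * (T - t) * F b
            + K * (min (S - lam * (T - t) * G b) 0) ^ 2) '' Set.Ici 0) := by
    apply csSup_le hBne
    rintro ψ ⟨x, hx, rfl⟩
    apply le_csInf hAne
    rintro a ⟨b, hb, rfl⟩
    exact hweak x hx b hb
  refine le_antisymm ?_ hsle
  by_cases hcase : ∃ b : ℝ, 0 ≤ b ∧ 1 + 2*K*b*(min (S - lam*(T-t)*G b) 0) ≤ 0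
  · -- interior minimizer: strong duality at the critical point
    obtain ⟨b₀, hb₀0, hb₀⟩ := hcase
    have hφcont : Continuous (fun b : ℝ => 1 + 2*K*b*(min (S - lam*(T-t)*G b) 0)) :=
      continuous_const.add (((continuous_const.mul continuous_id).mul
        ((continuous_const.sub (continuous_const.mul hGc)).min continuous_const)))
    have h0mem : (0:ℝ) ∈ Set.Icc (1 + 2*K*b₀*(min (S - lam*(T-t)*G b₀) 0))
        (1 + 2*K*(0:ℝ)*(min (S - lam*(T-t)*G 0) 0)) := by
      constructor
      · exact hb₀
      · norm_num
    obtain ⟨b₁, hb₁mem, hb₁⟩ := intermediate_value_Icc' hb₀0 hφcont.continuousOn h0mem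
    simp only at hb₁
    have hb₁ne : b₁ ≠ 0 := by
      intro h
      rw [h] at hb₁; norm_num at hb₁
    have hb₁0 : 0 < b₁ := lt_of_le_of_ne hb₁mem.1 (Ne.symm hb₁ne)
    have hy₁neg : S - lam*(T-t)*G b₁ < 0 := by
      by_contra h
      push_neg at h
      rw [min_eq_right h] at hb₁
      norm_num at hb₁
    have hmin : min (S - lam*(T-t)*G b₁) 0 = S - lam*(T-t)*G b₁ := min_eq_left hy₁neg.le
    rw [hmin] at hb₁
    have hkey : 2*K*b₁*(S - lam*(T-t)*G b₁) = -1 := by linarith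
    have hx₁neg : 2*K*(S - lam*(T-t)*G b₁) < 0 :=
      mul_neg_of_pos_of_neg (by positivity) hy₁neg
    have hx₁ne : 2*K*(S - lam*(T-t)*G b₁) ≠ 0 := ne_of_lt hx₁neg
    have hinv : -1/(2*K*(S - lam*(T-t)*G b₁)) = b₁ := by
      rw [div_eq_iff hx₁ne]
      linear_combination -hkey
    have hEq : S*(2*K*(S - lam*(T-t)*G b₁))
          - (T-t)*H (2*K*(S - lam*(T-t)*G b₁))
          - (2*K*(S - lam*(T-t)*G b₁))^2/(4*K)
        = -lam*(T-t)*F b₁ + K*(min (S - lam*(T-t)*G b₁) 0)^2 := by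
      rw [hHx _ hx₁neg, hinv, hmin]
      field_simp
      ring
    calc sInf ((fun b : ℝ => -lam * (T - t) * F b
            + K * (min (S - lam * (T - t) * G b) 0) ^ 2) '' Set.Ici 0)
        ≤ -lam*(T-t)*F b₁ + K*(min (S - lam*(T-t)*G b₁) 0)^2 :=
          csInf_le hbddA (hAmem b₁ hb₁0.le)
      _ = S*(2*K*(S - lam*(T-t)*G b₁))
            - (T-t)*H (2*K*(S - lam*(T-t)*G b₁))
            - (2*K*(S - lam*(T-t)*G b₁))^2/(4*K) := hEq.symm
      _ ≤ sSup ((fun x : ℝ => S * x - (T - t) * H x - x ^ 2 / (4 * K)) '' Set.Iic 0) :=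
          le_csSup hbddB (hBmem _ hx₁neg.le)
  · -- no interior minimizer: both sides equal -lam*(T-t)
    push_neg at hcase
    -- the sup is at least the value at x = 0, namely -lam*(T-t)
    have hB0 : S*(0:ℝ) - (T-t)*H 0 - (0:ℝ)^2/(4*K) = -lam*(T-t) := by
      rw [hHpos 0 le_rfl]; ring
    have hsup0 : -lam*(T-t)
        ≤ sSup ((fun x : ℝ => S * x - (T - t) * H x - x ^ 2 / (4 * K)) '' Set.Iic 0) := by
      rw [← hB0]
      exact le_csSup hbddB (hBmem 0 le_rfl)
    -- the inf is at most -lam*(T-t), by a limiting argument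
    have hFlim : Tendsto F atTop (nhds 1) := by
      have h := MeasureTheory.intervalIntegral_tendsto_integral_Ioi 0 hfi tendsto_id
      rw [hf_int] at h
      exact h.congr fun b => (hF b).symm
    have hglim : Tendsto (fun b : ℝ => -lam*(T-t)*F b + 1/(4*K*b^2)) atTop
        (nhds (-lam*(T-t))) := by
      have h1 : Tendsto (fun b : ℝ => -lam*(T-t)*F b) atTop (nhds (-lam*(T-t)*1)) :=
        hFlim.const_mul _
      have h2 : Tendsto (fun b : ℝ => 1/(4*K*b^2)) atTop (nhds 0) := by
        apply Tendsto.div_atTop tendsto_const_nhds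
        exact (tendsto_pow_atTop two_ne_zero).const_mul_atTop (by positivity)
      have := h1.add h2
      simpa using this
    have hinfle : sInf ((fun b : ℝ => -lam * (T - t) * F b
            + K * (min (S - lam * (T - t) * G b) 0) ^ 2) '' Set.Ici 0) ≤ -lam*(T-t) := by
      apply ge_of_tendsto hglim
      filter_upwards [eventually_ge_atTop (1:ℝ)] with b hb
      have hb0 : (0:ℝ) < b := lt_of_lt_of_le one_pos hb
      refine (csInf_le hbddA (hAmem b hb0.le)).trans ?_
      have hc := hcase b hb0.le
      have hm : min (S - lam*(T-t)*G b) 0 ≤ 0 := min_le_right _ _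
      have hu : 2*K*b*(min (S - lam*(T-t)*G b) 0) ≤ 0 :=
        mul_nonpos_of_nonneg_of_nonpos (by positivity) hm
      have hsq : K*(min (S - lam*(T-t)*G b) 0)^2 ≤ 1/(4*K*b^2) := by
        rw [le_div_iff₀ (by positivity)]
        nlinarith [mul_nonneg (le_of_lt hc) (neg_nonneg.mpr hu)]
      linarith
    calc sInf ((fun b : ℝ => -lam * (T - t) * F b
            + K * (min (S - lam * (T - t) * G b) 0) ^ 2) '' Set.Ici 0)
        ≤ -lam*(T-t) := hinfle
      _ ≤ sSup ((fun x : ℝ => S * x - (T - t) * H x - x ^ 2 / (4 * K)) '' Set.Iic 0) := hsup0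
end

section
/- (Theorem 1, value formula.) Let K > 0, 0 ≤ t < T and S ∈ ℝ. Define the fluid-limit value ṽ(t,S) as the infimum over all measurable control functions b : [t,T] → [0,∞) of ( -λ ∫ₜ^T F(b(s)) ds + K·min( S - λ ∫ₜ^T G(b(s)) ds, 0)² ). Then ṽ(t,S) = sup over x ∈ (-∞,0] of ( S x - (T-t) H(x) - x²/(4K) ). -/
open MeasureTheory Filter Set Topology

/-!
Weak duality: for `x ≤ 0` the pointwise bound `λ (F B + x G B) ≤ H x`, integrated along a control,
combines with `x y - x² / (4K) ≤ K min(y, 0)²` to bound every cost from below by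
`S x - (T - t) H x - x² / (4K)`. The bound holds because the integrand `f p (1 + x p)` of
`F + x G` changes sign at `p = -1/x`, so `B = -1/x` maximises `F B + x G B`, and integration by
parts identifies that maximum with `H x / λ`.

The gap is closed by constant controls. If `S ≥ λ (T - t) m̄`, the terminal penalty vanishes and
the cost tends to `-λ (T - t)`, the dual value at `x = 0`, as `B → ∞`. Otherwise the intermediate
value theorem gives `B > 0` with `S - λ (T - t) G B = x / (2K)` for `x = -1/B`, and then both
inequalities above are equalities.
-/

lemma mul_sub_sq_div_le_mul_min_sq {K : ℝ} (hK : 0 < K) {x : ℝ} (hx : x ≤ 0) (y : ℝ) :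
    x * y - x ^ 2 / (4 * K) ≤ K * (min y 0) ^ 2 := by
  rcases le_total 0 y with hy | hy
  · rw [min_eq_right hy]
    have : 0 ≤ x ^ 2 / (4 * K) := by positivity
    nlinarith [mul_nonpos_of_nonpos_of_nonneg hx hy]
  · rw [min_eq_left hy, sub_le_iff_le_add, ← sub_le_iff_le_add', le_div_iff₀ (by positivity)]
    nlinarith [sq_nonneg (2 * K * y - x)]

lemma csInf_eq_csSup_of_forall_le_of_forall_pos {P D : Set ℝ}
    (hle : ∀ v ∈ P, ∀ d ∈ D, d ≤ v) (hgap : ∀ ε > 0, ∃ v ∈ P, ∃ d ∈ D, v ≤ d + ε) :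
    sInf P = sSup D := by
  obtain ⟨v₀, hv₀, d₀, hd₀, -⟩ := hgap 1 one_pos
  have hP : BddBelow P := ⟨d₀, fun v hv => hle v hv d₀ hd₀⟩
  have hD : BddAbove D := ⟨v₀, fun d hd => hle v₀ hv₀ d hd⟩
  refine le_antisymm (le_of_forall_pos_le_add fun ε hε => ?_)
    (le_csInf ⟨v₀, hv₀⟩ fun v hv => csSup_le ⟨d₀, hd₀⟩ (hle v hv))
  obtain ⟨v, hv, d, hd, hvd⟩ := hgap ε hε
  linarith [csInf_le hP hv, le_csSup hD hd]

lemma dual_le_cost_of_forall_le {u w : ℝ → ℝ} {lam K S h x t T : ℝ} (hK : 0 < K) (hx : x ≤ 0)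
    (htT : t ≤ T) (hu : IntervalIntegrable u volume t T) (hw : IntervalIntegrable w volume t T)
    (hbound : ∀ s, lam * (u s + x * w s) ≤ h) :
    S * x - (T - t) * h - x ^ 2 / (4 * K)
      ≤ -lam * (∫ s in t..T, u s) + K * (min (S - lam * ∫ s in t..T, w s) 0) ^ 2 := by
  have hint := intervalIntegral.integral_mono_on htT ((hu.add (hw.const_mul x)).const_mul lam)
    intervalIntegrable_const fun s _ => hbound s
  rw [intervalIntegral.integral_const_mul, intervalIntegral.integral_add hu (hw.const_mul x),
    intervalIntegral.integral_const_mul, intervalIntegral.integral_const, smul_eq_mul] at hint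
  linarith [mul_sub_sq_div_le_mul_min_sq hK hx (S - lam * ∫ s in t..T, w s)]

lemma intervalIntegrable_comp_of_monotone {φ b : ℝ → ℝ} (hφ : Continuous φ) (hmono : Monotone φ)
    {M : ℝ} (hM : Tendsto φ atTop (𝓝 M)) (hb : Measurable b) (hb0 : ∀ s, 0 ≤ b s) (t T : ℝ) :
    IntervalIntegrable (fun s => φ (b s)) volume t T :=
  intervalIntegrable_const.mono_fun' (hφ.measurable.comp hb).aestronglyMeasurable
    (Eventually.of_forall fun s => abs_le_max_abs_abs (hmono (hb0 s)) (hmono.ge_of_tendsto hM _))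

lemma integral_le_integral_of_sign_change {h : ℝ → ℝ} (hh : Continuous h) {c : ℝ}
    (hpos : ∀ p ≤ c, 0 ≤ h p) (hneg : ∀ p, c ≤ p → h p ≤ 0) (B : ℝ) :
    ∫ p in (0 : ℝ)..B, h p ≤ ∫ p in (0 : ℝ)..c, h p := by
  rw [← intervalIntegral.integral_add_adjacent_intervals (hh.intervalIntegrable 0 c)
    (hh.intervalIntegrable c B)]
  suffices ∫ p in c..B, h p ≤ 0 by linarith
  rcases le_total c B with hcB | hBc
  · simpa using intervalIntegral.integral_mono_on hcB (hh.intervalIntegrable c B)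
      intervalIntegrable_const fun p hp => hneg p hp.1
  · rw [intervalIntegral.integral_symm, neg_nonpos]
    exact intervalIntegral.integral_nonneg hBc fun p hp => hpos p hp.2

lemma continuous_monotone_tendsto_of_primitive {g F : ℝ → ℝ} (hg : Continuous g) (hg0 : 0 ≤ g)
    (hint : IntegrableOn g (Ioi 0)) (hF : ∀ b, F b = ∫ p in (0 : ℝ)..b, g p) :
    Continuous F ∧ Monotone F ∧ Tendsto F atTop (𝓝 (∫ p in Ioi 0, g p)) := by
  obtain rfl : F = fun b => ∫ p in (0 : ℝ)..b, g p := funext hF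
  refine ⟨intervalIntegral.continuous_primitive (hg.intervalIntegrable ·) 0, fun a b hab => ?_,
    intervalIntegral_tendsto_integral_Ioi 0 hint tendsto_id⟩
  dsimp only
  rw [← intervalIntegral.integral_add_adjacent_intervals (hg.intervalIntegrable 0 a)
    (hg.intervalIntegrable a b)]
  linarith [intervalIntegral.integral_nonneg (μ := volume) hab fun u _ => hg0 u]

section Primitives

variable {f F G : ℝ → ℝ} (hf : Continuous f) (hF : ∀ b, F b = ∫ p in (0 : ℝ)..b, f p)
  (hG : ∀ b, G b = ∫ p in (0 : ℝ)..b, p * f p)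
include hf hF hG

lemma integral_primitive_eq_s11 (c : ℝ) : ∫ b in (0 : ℝ)..c, F b = c * F c - G c := by
  obtain rfl : F = fun b => ∫ p in (0 : ℝ)..b, f p := funext hF
  have := intervalIntegral.integral_mul_deriv_eq_deriv_mul
    (fun b _ => (hf.integral_hasStrictDerivAt 0 b).hasDerivAt) (fun b _ => hasDerivAt_id b)
    (hf.intervalIntegrable 0 c) intervalIntegrable_const
  simpa [hG, mul_comm] using this

lemma neg_mul_integral_primitive_eq {x : ℝ} (hx : x ≠ 0) :
    -x * ∫ b in (0 : ℝ)..-1 / x, F b = F (-1 / x) + x * G (-1 / x) := by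
  rw [integral_primitive_eq_s11 hf hF hG]
  field_simp
  ring

lemma primitive_add_mul_primitive_le (hf0 : 0 ≤ f) {x : ℝ} (hx : x < 0) (B : ℝ) :
    F B + x * G B ≤ F (-1 / x) + x * G (-1 / x) := by
  have hpf : Continuous fun p => x * (p * f p) := by fun_prop
  have hsum : ∀ b, F b + x * G b = ∫ p in (0 : ℝ)..b, f p * (1 + x * p) := fun b => by
    rw [hF, hG, ← intervalIntegral.integral_const_mul,
      ← intervalIntegral.integral_add (hf.intervalIntegrable 0 b) (hpf.intervalIntegrable 0 b)]
    congr 1 with p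
    ring
  rw [hsum, hsum]
  refine integral_le_integral_of_sign_change (by fun_prop) (fun p hp => ?_) (fun p hp => ?_) B
  · rw [le_div_iff_of_neg hx] at hp
    exact mul_nonneg (hf0 p) (by linarith)
  · rw [div_le_iff_of_neg hx] at hp
    exact mul_nonpos_of_nonneg_of_nonpos (hf0 p) (by linarith)

end Primitives

lemma exists_pos_sub_mul_eq_div {G : ℝ → ℝ} (hG : Continuous G) (hGmono : Monotone G)
    {m L K S : ℝ} (hK : 0 < K) (hL : 0 ≤ L) (hGm : Tendsto G atTop (𝓝 m)) (hS : S < L * m) :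
    ∃ B > 0, S - L * G B = -1 / B / (2 * K) := by
  set D : ℝ → ℝ := fun B => S - L * G B - -1 / B / (2 * K) with hD
  set B₁ := 1 / (2 * K * (L * m - S))
  have hB₁ : 0 < B₁ := by have := sub_pos.2 hS; positivity
  have hD₁ : 0 ≤ D B₁ := by
    have hinv : -(-1 / B₁ / (2 * K)) = L * m - S := by simp only [B₁]; field_simp
    have := mul_le_mul_of_nonneg_left (hGmono.ge_of_tendsto hGm B₁) hL
    simp only [hD]; linarith
  have hDlim : Tendsto D atTop (𝓝 (S - L * m)) := by
    have hinv : Tendsto (fun B : ℝ => -1 / B / (2 * K)) atTop (𝓝 0) := by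
      simpa [neg_div] using (tendsto_inv_atTop_zero.neg.div_const (2 * K) : Tendsto _ atTop _)
    simpa using (tendsto_const_nhds.sub (hGm.const_mul L)).sub hinv
  obtain ⟨B₂, hD₂, hB₂⟩ := ((hDlim.eventually (gt_mem_nhds (sub_neg.2 hS))).and
    (eventually_ge_atTop B₁)).exists
  have hcont : ContinuousOn D (Icc B₁ B₂) := by
    have : ∀ B ∈ Icc B₁ B₂, B ≠ 0 := fun B hB => (hB₁.trans_le hB.1).ne'
    fun_prop (disch := assumption)
  obtain ⟨B, hB, hDB⟩ := intermediate_value_Icc' hB₂ hcont ⟨hD₂.le, hD₁⟩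
  exact ⟨B, hB₁.trans_le hB.1, sub_eq_zero.1 hDB⟩

lemma exists_const_control_cost_le {F G H : ℝ → ℝ} {lam K τ S m ε : ℝ}
    (hF1 : Tendsto F atTop (𝓝 1)) (hG : Continuous G) (hGmono : Monotone G)
    (hGm : Tendsto G atTop (𝓝 m)) (hH0 : H 0 = lam)
    (hH : ∀ B > 0, H (-1 / B) = lam * (F B + -1 / B * G B))
    (hlam : 0 < lam) (hτ : 0 < τ) (hK : 0 < K) (hε : 0 < ε) :
    ∃ B ≥ 0, ∃ x ≤ 0, -lam * (τ * F B) + K * (min (S - lam * (τ * G B)) 0) ^ 2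
      ≤ S * x - τ * H x - x ^ 2 / (4 * K) + ε := by
  have hL : 0 < lam * τ := mul_pos hlam hτ
  rcases le_or_gt (lam * τ * m) S with hS | hS
  · obtain ⟨B, hFB, hB⟩ := ((hF1.eventually (lt_mem_nhds (sub_lt_self 1 (div_pos hε hL)))).and
      (eventually_ge_atTop 0)).exists
    refine ⟨B, hB, 0, le_rfl, ?_⟩
    have hmin : min (S - lam * (τ * G B)) 0 = 0 :=
      min_eq_right (by nlinarith [hGmono.ge_of_tendsto hGm B])
    rw [sub_lt_comm, lt_div_iff₀ hL] at hFB
    rw [hmin, hH0]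
    norm_num
    linarith
  · obtain ⟨B, hB, hbal⟩ := exists_pos_sub_mul_eq_div hG hGmono hK hL.le hGm hS
    have hx : -1 / B < 0 := div_neg_of_neg_of_pos (by norm_num) hB
    refine ⟨B, hB.le, -1 / B, hx.le, ?_⟩
    have hmin : min (S - lam * (τ * G B)) 0 = -1 / B / (2 * K) := by
      rw [← mul_assoc, hbal]
      exact min_eq_left (div_nonpos_of_nonpos_of_nonneg hx.le (by positivity))
    have hS' : S = -1 / B / (2 * K) + lam * τ * G B := by linarith
    rw [hmin, hH B hB, hS']
    field_simp
    ring_nf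
    have : 0 < K * B ^ 2 * ε := by positivity
    linarith

theorem stmt_11_general (f F G H : ℝ → ℝ) (mbar lam : ℝ)
    (hf_cont : Continuous f)
    (hf_nonpos : ∀ p ≤ (0 : ℝ), f p = 0)
    (hf_pos : ∀ p : ℝ, 0 < p → 0 < f p)
    (hf_int : (∫ p in Set.Ioi (0 : ℝ), f p) = 1)
    (hmean_int : MeasureTheory.IntegrableOn (fun p : ℝ => p * f p) (Set.Ioi 0))
    (hmbar : mbar = ∫ p in Set.Ioi (0 : ℝ), p * f p)
    (hF : ∀ b : ℝ, F b = ∫ p in (0 : ℝ)..b, f p)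
    (hG : ∀ b : ℝ, G b = ∫ p in (0 : ℝ)..b, p * f p)
    (hlam : 0 < lam)
    (hHneg : ∀ x < (0 : ℝ), H x = -(lam * x) * ∫ p in (0 : ℝ)..(-1 / x), F p)
    (hHpos : ∀ x : ℝ, 0 ≤ x → H x = lam * (1 + x * mbar))
    (K t T S : ℝ) (hK : 0 < K) (htT : t < T) :
    sInf {v : ℝ | ∃ b : ℝ → ℝ, Measurable b ∧ (∀ s, 0 ≤ b s) ∧
        v = -lam * (∫ s in t..T, F (b s))
              + K * (min (S - lam * ∫ s in t..T, G (b s)) 0) ^ 2}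
      = sSup ((fun x : ℝ => S * x - (T - t) * H x - x ^ 2 / (4 * K)) '' Set.Iic 0) := by
  have hf0 : 0 ≤ f := fun p => (le_or_gt p 0).elim (fun h => (hf_nonpos p h).ge)
    fun h => (hf_pos p h).le
  have hpf0 : 0 ≤ fun p => p * f p := fun p => (le_or_gt p 0).elim
    (fun h => by simp [hf_nonpos p h]) fun h => mul_nonneg h.le (hf0 p)
  have hfi : IntegrableOn f (Ioi 0) := .of_integral_ne_zero (hf_int ▸ one_ne_zero)
  obtain ⟨hFc, hFmono, hF1⟩ := continuous_monotone_tendsto_of_primitive hf_cont hf0 hfi hF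
  obtain ⟨hGc, hGmono, hGm⟩ :=
    continuous_monotone_tendsto_of_primitive (by fun_prop) hpf0 hmean_int hG
  rw [hf_int] at hF1
  rw [← hmbar] at hGm
  have hH : ∀ x < 0, H x = lam * (F (-1 / x) + x * G (-1 / x)) := fun x hx => by
    rw [hHneg x hx, neg_mul_eq_mul_neg, mul_assoc,
      neg_mul_integral_primitive_eq hf_cont hF hG hx.ne]
  have hHam : ∀ x ≤ 0, ∀ B, lam * (F B + x * G B) ≤ H x := by
    intro x hx B
    rcases hx.lt_or_eq with hx | rfl
    · rw [hH x hx]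
      exact mul_le_mul_of_nonneg_left
        (primitive_add_mul_primitive_le hf_cont hF hG hf0 hx B) hlam.le
    · simpa [hHpos 0 le_rfl] using
        mul_le_mul_of_nonneg_left (hFmono.ge_of_tendsto hF1 B) hlam.le
  refine csInf_eq_csSup_of_forall_le_of_forall_pos ?_ fun ε hε => ?_
  · rintro _ ⟨b, hb, hb0, rfl⟩ _ ⟨x, hx, rfl⟩
    exact dual_le_cost_of_forall_le hK hx htT.le
      (intervalIntegrable_comp_of_monotone hFc hFmono hF1 hb hb0 t T)
      (intervalIntegrable_comp_of_monotone hGc hGmono hGm hb hb0 t T) fun s => hHam x hx (b s)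
  · obtain ⟨B, hB, x, hx, hle⟩ := exists_const_control_cost_le (H := H) (S := S) hF1 hGc hGmono hGm
      (by simp [hHpos 0 le_rfl])
      (fun B hB => by simpa using hH (-1 / B) (div_neg_of_neg_of_pos (by norm_num) hB))
      hlam (sub_pos.2 htT) hK hε
    exact ⟨_, ⟨fun _ => B, measurable_const, fun _ => hB, by simp⟩, _, ⟨x, hx, rfl⟩, hle⟩

/-- (Theorem 1, value formula.) The fluid-limit value `ṽ(t,S)`, defined as the infimum over
all measurable controls `b : [t,T] → [0,∞)` of
`-λ ∫ₜ^T F(b(s)) ds + K min(S - λ ∫ₜ^T G(b(s)) ds, 0)²`, equals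
`sup_{x ≤ 0} (S x - (T-t)H(x) - x²/(4K))`. -/
theorem stmt_11 (f F G H : ℝ → ℝ) (mbar lam : ℝ)
    (hf_cont : Continuous f)
    (hf_nonpos : ∀ p ≤ (0 : ℝ), f p = 0)
    (hf_pos : ∀ p : ℝ, 0 < p → 0 < f p)
    (hf_int : (∫ p in Set.Ioi (0 : ℝ), f p) = 1)
    (hf_tail : Filter.Tendsto (fun p : ℝ => p ^ 3 * f p) Filter.atTop (nhds 0))
    (hmean_int : MeasureTheory.IntegrableOn (fun p : ℝ => p * f p) (Set.Ioi 0))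
    (hmbar : mbar = ∫ p in Set.Ioi (0 : ℝ), p * f p)
    (hF : ∀ b : ℝ, F b = ∫ p in (0 : ℝ)..b, f p)
    (hG : ∀ b : ℝ, G b = ∫ p in (0 : ℝ)..b, p * f p)
    (hlam : 0 < lam)
    (hHneg : ∀ x < (0 : ℝ), H x = -(lam * x) * ∫ p in (0 : ℝ)..(-1 / x), F p)
    (hHpos : ∀ x : ℝ, 0 ≤ x → H x = lam * (1 + x * mbar))
    (K t T S : ℝ) (hK : 0 < K) (ht : 0 ≤ t) (htT : t < T) :
    sInf {v : ℝ | ∃ b : ℝ → ℝ, Measurable b ∧ (∀ s, 0 ≤ b s) ∧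
        v = -lam * (∫ s in t..T, F (b s))
              + K * (min (S - lam * ∫ s in t..T, G (b s)) 0) ^ 2}
      = sSup ((fun x : ℝ => S * x - (T - t) * H x - x ^ 2 / (4 * K)) '' Set.Iic 0) :=
  stmt_11_general f F G H mbar lam hf_cont hf_nonpos hf_pos hf_int hmean_int hmbar hF hG hlam hHneg
    hHpos K t T S hK htT
end

section
/- (Theorem 1, saturated-budget regime.) Let K > 0, 0 ≤ t < T and S ≥ λ m̄ (T-t). Then the supremum over x ∈ (-∞,0] of ( S x - (T-t) H(x) - x²/(4K) ) equals -λ (T-t), and it is attained at x = 0. -/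
open MeasureTheory Filter Set

/-- (Theorem 1, saturated-budget regime.) Let `K > 0`, `0 ≤ t < T` and `S ≥ λ m̄ (T-t)`.
Then the supremum over `x ∈ (-∞,0]` of `S x - (T-t)H(x) - x²/(4K)` equals `-λ(T-t)`,
and it is attained at `x = 0`. -/
theorem stmt_13 (f F H : ℝ → ℝ) (mbar lam : ℝ)
    (hf_cont : Continuous f)
    (hf_nonpos : ∀ p ≤ (0 : ℝ), f p = 0)
    (hf_pos : ∀ p : ℝ, 0 < p → 0 < f p)
    (hf_int : (∫ p in Set.Ioi (0 : ℝ), f p) = 1)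
    (hf_tail : Filter.Tendsto (fun p : ℝ => p ^ 3 * f p) Filter.atTop (nhds 0))
    (hmean_int : MeasureTheory.IntegrableOn (fun p : ℝ => p * f p) (Set.Ioi 0))
    (hmbar : mbar = ∫ p in Set.Ioi (0 : ℝ), p * f p)
    (hF : ∀ b : ℝ, F b = ∫ p in (0 : ℝ)..b, f p)
    (hlam : 0 < lam)
    (hHneg : ∀ x < (0 : ℝ), H x = -(lam * x) * ∫ p in (0 : ℝ)..(-1 / x), F p)
    (hHpos : ∀ x : ℝ, 0 ≤ x → H x = lam * (1 + x * mbar))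
    (K t T S : ℝ) (hK : 0 < K) (ht : 0 ≤ t) (htT : t < T)
    (hS : lam * mbar * (T - t) ≤ S) :
    IsGreatest ((fun x : ℝ => S * x - (T - t) * H x - x ^ 2 / (4 * K)) '' Set.Iic 0)
        (-lam * (T - t))
      ∧ S * 0 - (T - t) * H 0 - (0 : ℝ) ^ 2 / (4 * K) = -lam * (T - t) := by
  have hT : 0 < T - t := by linarith
  have hH0 : H 0 = lam := by rw [hHpos 0 le_rfl]; ring
  have hval0 : S * 0 - (T - t) * H 0 - (0 : ℝ) ^ 2 / (4 * K) = -lam * (T - t) := by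
    rw [hH0]; ring
  have hf_nonneg : ∀ p : ℝ, 0 ≤ f p := by
    intro p
    rcases le_or_gt p 0 with h | h
    · rw [hf_nonpos p h]
    · exact (hf_pos p h).le
  have hf_ion : IntegrableOn f (Ioi 0) := by
    by_contra h
    rw [MeasureTheory.integral_undef h] at hf_int
    norm_num at hf_int
  -- key lemma: for b > 0, b - mbar ≤ ∫ p in 0..b, F p
  have key : ∀ b : ℝ, 0 < b → b - mbar ≤ ∫ p in (0 : ℝ)..b, F p := by
    intro b hb
    have hsplit : Ioc (0 : ℝ) b ∪ Ioi b = Ioi 0 := Set.Ioc_union_Ioi_eq_Ioi hb.le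
    have hdisj : Disjoint (Ioc (0 : ℝ) b) (Ioi b) := Set.Ioc_disjoint_Ioi le_rfl
    have hf_ioc : IntegrableOn f (Ioc 0 b) := hf_ion.mono_set (by rw [← hsplit]; exact subset_union_left)
    have hf_ioi : IntegrableOn f (Ioi b) := hf_ion.mono_set (by rw [← hsplit]; exact subset_union_right)
    have hpf_ioc : IntegrableOn (fun p : ℝ => p * f p) (Ioc 0 b) :=
      hmean_int.mono_set (by rw [← hsplit]; exact subset_union_left)
    have hpf_ioi : IntegrableOn (fun p : ℝ => p * f p) (Ioi b) :=
      hmean_int.mono_set (by rw [← hsplit]; exact subset_union_right)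
    -- split ∫ f over Ioi 0
    have hsplitf : (∫ p in Set.Ioi (0 : ℝ), f p)
        = (∫ p in Ioc (0:ℝ) b, f p) + ∫ p in Ioi b, f p := by
      rw [← hsplit, MeasureTheory.setIntegral_union hdisj measurableSet_Ioi hf_ioc hf_ioi]
    have hsplitpf : mbar = (∫ p in Ioc (0:ℝ) b, p * f p) + ∫ p in Ioi b, p * f p := by
      rw [hmbar, ← hsplit, MeasureTheory.setIntegral_union hdisj measurableSet_Ioi hpf_ioc hpf_ioi]
    have hFb : F b = ∫ p in Ioc (0:ℝ) b, f p := by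
      rw [hF b, intervalIntegral.integral_of_le hb.le]
    have hFb1 : 1 - F b = ∫ p in Ioi b, f p := by
      rw [hFb]; rw [hsplitf] at hf_int; linarith
    -- tail bound : b * (1 - F b) ≤ ∫ p in Ioi b, p * f p
    have htail : b * (1 - F b) ≤ ∫ p in Ioi b, p * f p := by
      rw [hFb1, ← MeasureTheory.integral_const_mul]
      apply MeasureTheory.setIntegral_mono_on (hf_ioi.const_mul b) hpf_ioi measurableSet_Ioi
      intro p hp
      exact mul_le_mul_of_nonneg_right (le_of_lt hp) (hf_nonneg p)
    -- integration by parts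
    have hFderiv : ∀ x : ℝ, HasDerivAt F (f x) x := by
      intro x
      have h1 : HasDerivAt (fun u => ∫ p in (0 : ℝ)..u, f p) (f x) x :=
        (hf_cont.integral_hasStrictDerivAt 0 x).hasDerivAt
      have : F = fun u => ∫ p in (0 : ℝ)..u, f p := funext hF
      rw [this]; exact h1
    have hibp : (∫ p in (0:ℝ)..b, F p * 1)
        = F b * b - F 0 * 0 - ∫ p in (0:ℝ)..b, f p * p := by
      apply intervalIntegral.integral_mul_deriv_eq_deriv_mul
        (fun x _ => hFderiv x) (fun x _ => hasDerivAt_id x)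
        (hf_cont.intervalIntegrable 0 b) (continuous_const.intervalIntegrable 0 b)
    have hF0 : F 0 = 0 := by rw [hF 0, intervalIntegral.integral_same]
    have hfp : (∫ p in (0:ℝ)..b, f p * p) = ∫ p in Ioc (0:ℝ) b, p * f p := by
      rw [intervalIntegral.integral_of_le hb.le]
      congr 1; funext p; ring
    have hibp' : (∫ p in (0:ℝ)..b, F p)
        = F b * b - ∫ p in Ioc (0:ℝ) b, p * f p := by
      have : (∫ p in (0:ℝ)..b, F p) = ∫ p in (0:ℝ)..b, F p * 1 := by
        congr 1; funext p; ring
      rw [this, hibp, hF0, hfp]; ring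
    rw [hibp']
    nlinarith [htail, hsplitpf]
  refine ⟨⟨⟨0, by simp, hval0⟩, ?_⟩, hval0⟩
  rintro y ⟨x, hx, rfl⟩
  simp only
  rcases (Set.mem_Iic.mp hx).lt_or_eq with hxneg | rfl
  · have hx0 : x ≠ 0 := ne_of_lt hxneg
    have hb : 0 < -1 / x := by
      rw [div_pos_iff]; right; constructor <;> linarith
    have hI := key (-1 / x) hb
    rw [hHneg x hxneg]
    have h2 : (T - t) * (lam * x) ≤ 0 := mul_nonpos_of_nonneg_of_nonpos hT.le (mul_nonpos_of_nonneg_of_nonpos hlam.le hxneg.le)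
    have h3 := mul_le_mul_of_nonpos_left hI h2
    have hrhs : (T - t) * (lam * x) * (-1 / x - mbar)
        = -lam * (T - t) - lam * mbar * (T - t) * x := by
      field_simp
    rw [hrhs] at h3
    have h1 : S * x ≤ lam * mbar * (T - t) * x :=
      mul_le_mul_of_nonpos_right hS hxneg.le
    have h4 : 0 ≤ x ^ 2 / (4 * K) := by positivity
    nlinarith [h3, h1, h4]
  · rw [hval0]
end

section
/- (Conjugate of the infimal convolution.) For every x ∈ ℝ, the supremum over 𝔞 ∈ [0, Σ_{j=1}^J λʲ m̄ʲ] of ( x 𝔞 - L(𝔞) ) equals Σ_{j=1}^J Hʲ(x), where L(𝔞) := inf { Σ_{j=1}^J Lʲ(aʲ) : aʲ ∈ [0, λʲ m̄ʲ] for each j and Σ_{j=1}^J aʲ = 𝔞 }. -/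
/-!
Substituting `a = λ G(b)` turns the objective `x a - L(a)` of one density into `λ ψ(b)` with
`ψ(b) = x G(b) + α F(b)`, whose derivative is `f(b) (x b + α)`. For `x ≥ 0`, `ψ` increases to
its limit `x m̄ + α`, which is the value at the endpoint `a = λ m̄`; for `x < 0`, `ψ` peaks at
`b = -α / x`, where integration by parts, `∫₀ᵇ F = b F(b) - G(b)`, identifies `λ ψ(b)` with
`H(x)`. Since every one-density supremum is attained, the conjugate of the infimal convolution is
the sum of the conjugates: the maximizers add up to a maximizer of the sum.
-/

open MeasureTheory Filter Set Topology

lemma hasDerivAt_of_forall_eq_intervalIntegral {g Φ : ℝ → ℝ} (hg : Continuous g)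
    (hΦ : ∀ b, Φ b = ∫ p in (0 : ℝ)..b, g p) (b : ℝ) : HasDerivAt Φ (g b) b := by
  rw [funext hΦ]
  exact (hg.integral_hasStrictDerivAt 0 b).hasDerivAt

lemma tendsto_of_forall_eq_intervalIntegral {g Φ : ℝ → ℝ} (hg : IntegrableOn g (Ioi 0))
    (hΦ : ∀ b, Φ b = ∫ p in (0 : ℝ)..b, g p) :
    Tendsto Φ atTop (𝓝 (∫ p in Ioi (0 : ℝ), g p)) := by
  rw [funext hΦ]
  exact intervalIntegral_tendsto_integral_Ioi 0 hg tendsto_id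

lemma le_of_hasDerivAt_sign_change {φ φ' : ℝ → ℝ} {t₀ : ℝ}
    (hφ : ∀ t, HasDerivAt φ (φ' t) t) (hleft : ∀ t < t₀, 0 ≤ φ' t)
    (hright : ∀ t, t₀ < t → φ' t ≤ 0) (t : ℝ) : φ t ≤ φ t₀ := by
  have hcont : Continuous φ := continuous_iff_continuousAt.2 fun t => (hφ t).continuousAt
  rcases le_total t t₀ with ht | ht
  · refine monotoneOn_of_hasDerivWithinAt_nonneg (convex_Iic t₀) hcont.continuousOn
      (fun s _ => (hφ s).hasDerivWithinAt) (fun s hs => hleft s ?_) ht (mem_Iic.2 le_rfl) ht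
    rwa [interior_Iic] at hs
  · refine antitoneOn_of_hasDerivWithinAt_nonpos (convex_Ici t₀) hcont.continuousOn
      (fun s _ => (hφ s).hasDerivWithinAt) (fun s hs => hright s ?_) (mem_Ici.2 le_rfl) ht ht
    rwa [interior_Ici] at hs

section Profile

variable {f F G : ℝ → ℝ} {mbar : ℝ}

lemma intervalIntegral_cdf_eq (hf : Continuous f) (hF : ∀ b, F b = ∫ p in (0 : ℝ)..b, f p)
    (hG : ∀ b, G b = ∫ p in (0 : ℝ)..b, p * f p) (b : ℝ) :
    ∫ p in (0 : ℝ)..b, F p = b * F b - G b := by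
  have h := intervalIntegral.integral_mul_deriv_eq_deriv_mul (a := 0) (b := b) (v := id)
    (fun p _ => hasDerivAt_of_forall_eq_intervalIntegral hf hF p) (fun p _ => hasDerivAt_id p)
    (hf.intervalIntegrable 0 b) intervalIntegrable_const
  simp only [mul_one, id, mul_zero, sub_zero] at h
  rw [h, hG, mul_comm]
  simp only [mul_comm (f _)]

lemma hasDerivAt_profile (hf : Continuous f) (hF : ∀ b, F b = ∫ p in (0 : ℝ)..b, f p)
    (hG : ∀ b, G b = ∫ p in (0 : ℝ)..b, p * f p) (x α t : ℝ) :
    HasDerivAt (fun t => x * G t + α * F t) (f t * (x * t + α)) t := by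
  have hf' : Continuous fun p => p * f p := continuous_id.mul hf
  refine (((hasDerivAt_of_forall_eq_intervalIntegral hf' hG t).const_mul x).add
    ((hasDerivAt_of_forall_eq_intervalIntegral hf hF t).const_mul α)).congr_deriv ?_
  ring

lemma tendsto_profile (hf_int : ∫ p in Ioi (0 : ℝ), f p = 1)
    (hmean_int : IntegrableOn (fun p => p * f p) (Ioi 0))
    (hmbar : mbar = ∫ p in Ioi (0 : ℝ), p * f p)
    (hF : ∀ b, F b = ∫ p in (0 : ℝ)..b, f p) (hG : ∀ b, G b = ∫ p in (0 : ℝ)..b, p * f p)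
    (x α : ℝ) :
    Tendsto (fun t => x * G t + α * F t) atTop (𝓝 (x * mbar + α)) := by
  have hfi : IntegrableOn f (Ioi 0) := by
    by_contra h
    rw [integral_undef h] at hf_int
    exact zero_ne_one hf_int
  have hFlim := tendsto_of_forall_eq_intervalIntegral hfi hF
  have hGlim := tendsto_of_forall_eq_intervalIntegral hmean_int hG
  rw [hf_int] at hFlim
  rw [← hmbar] at hGlim
  simpa using (hGlim.const_mul x).add (hFlim.const_mul α)

lemma isGreatest_profile_of_nonneg (hf : Continuous f) (hf_nonneg : ∀ p, 0 ≤ f p)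
    (hf_int : ∫ p in Ioi (0 : ℝ), f p = 1)
    (hmean_int : IntegrableOn (fun p => p * f p) (Ioi 0))
    (hmbar : mbar = ∫ p in Ioi (0 : ℝ), p * f p)
    (hF : ∀ b, F b = ∫ p in (0 : ℝ)..b, f p) (hG : ∀ b, G b = ∫ p in (0 : ℝ)..b, p * f p)
    {x α : ℝ} (hx : 0 ≤ x) (hα : 0 ≤ α) :
    IsGreatest (insert (x * mbar + α) ((fun t => x * G t + α * F t) '' Ici 0))
      (x * mbar + α) := by
  have hderiv := hasDerivAt_profile hf hF hG x α
  have hmono : MonotoneOn (fun t => x * G t + α * F t) (Ici 0) := by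
    refine monotoneOn_of_hasDerivWithinAt_nonneg (convex_Ici 0)
      (fun t _ => (hderiv t).continuousAt.continuousWithinAt)
      (fun t _ => (hderiv t).hasDerivWithinAt) fun t ht => ?_
    rw [interior_Ici, mem_Ioi] at ht
    exact mul_nonneg (hf_nonneg t) (by positivity)
  refine ⟨mem_insert _ _, ?_⟩
  rintro _ (rfl | ⟨b, hb, rfl⟩)
  · exact le_rfl
  · exact ge_of_tendsto (tendsto_profile hf_int hmean_int hmbar hF hG x α)
      (eventually_atTop.2 ⟨b, fun t hbt => hmono hb (mem_Ici.2 (hb.trans hbt)) hbt⟩)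

lemma isGreatest_profile_of_neg (hf : Continuous f) (hf_nonneg : ∀ p, 0 ≤ f p)
    (hf_int : ∫ p in Ioi (0 : ℝ), f p = 1)
    (hmean_int : IntegrableOn (fun p => p * f p) (Ioi 0))
    (hmbar : mbar = ∫ p in Ioi (0 : ℝ), p * f p)
    (hF : ∀ b, F b = ∫ p in (0 : ℝ)..b, f p) (hG : ∀ b, G b = ∫ p in (0 : ℝ)..b, p * f p)
    {x α : ℝ} (hx : x < 0) (hα : 0 ≤ α) :
    IsGreatest (insert (x * mbar + α) ((fun t => x * G t + α * F t) '' Ici 0))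
      (x * G (-α / x) + α * F (-α / x)) := by
  have hmax : ∀ t, x * G t + α * F t ≤ x * G (-α / x) + α * F (-α / x) := by
    refine le_of_hasDerivAt_sign_change (hasDerivAt_profile hf hF hG x α)
      (fun t ht => mul_nonneg (hf_nonneg t) ?_) fun t ht => mul_nonpos_of_nonneg_of_nonpos
        (hf_nonneg t) ?_
    · linarith [(lt_div_iff_of_neg' hx).1 ht]
    · linarith [(div_lt_iff_of_neg' hx).1 ht]
  refine ⟨mem_insert_of_mem _ ⟨-α / x, div_nonneg_of_nonpos (by linarith) hx.le, rfl⟩, ?_⟩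
  rintro _ (rfl | ⟨b, -, rfl⟩)
  · exact le_of_tendsto' (tendsto_profile hf_int hmean_int hmbar hF hG x α) hmax
  · exact hmax b

end Profile

section Reparametrization

variable {F G L Ginv : ℝ → ℝ} {mbar lam alpha : ℝ}

lemma image_conj_eq_image_profile (hlam : 0 < lam) (hGbij : BijOn G (Ici 0) (Ico 0 mbar))
    (hGinv : ∀ a ∈ Ico (0 : ℝ) mbar, Ginv a ∈ Ici (0 : ℝ) ∧ G (Ginv a) = a)
    (hL : ∀ a ∈ Ico (0 : ℝ) (lam * mbar), L a = -(lam * alpha) * F (Ginv (a / lam)))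
    (hLend : L (lam * mbar) = -(lam * alpha)) (x : ℝ) :
    (fun a => x * a - L a) '' Icc 0 (lam * mbar) =
      (lam * ·) '' insert (x * mbar + alpha) ((fun b => x * G b + alpha * F b) '' Ici 0) := by
  have hG0 : G 0 ∈ Ico 0 mbar := hGbij.mapsTo self_mem_Ici
  ext v
  constructor
  · rintro ⟨a, ⟨ha0, ha1⟩, rfl⟩
    rcases ha1.eq_or_lt with rfl | hlt
    · exact ⟨_, mem_insert _ _, by dsimp only; rw [hLend]; ring⟩
    · have hmem : a / lam ∈ Ico 0 mbar := ⟨div_nonneg ha0 hlam.le, (div_lt_iff₀' hlam).2 hlt⟩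
      obtain ⟨hb, hGb⟩ := hGinv _ hmem
      refine ⟨_, mem_insert_of_mem _ ⟨_, hb, rfl⟩, ?_⟩
      dsimp only
      rw [hL a ⟨ha0, hlt⟩, hGb]
      field_simp
      ring
  · rintro ⟨_, rfl | ⟨b, hb, rfl⟩, rfl⟩
    · refine ⟨lam * mbar, ⟨mul_nonneg hlam.le (hG0.1.trans hG0.2.le), le_rfl⟩, ?_⟩
      dsimp only
      rw [hLend]
      ring
    · have hGb := hGbij.mapsTo hb
      have hmem : lam * G b ∈ Ico 0 (lam * mbar) :=
        ⟨mul_nonneg hlam.le hGb.1, mul_lt_mul_of_pos_left hGb.2 hlam⟩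
      have hinv : Ginv (lam * G b / lam) = b := by
        rw [mul_div_cancel_left₀ _ hlam.ne']
        exact hGbij.injOn (hGinv _ hGb).1 hb (hGinv _ hGb).2
      refine ⟨lam * G b, Ico_subset_Icc_self hmem, ?_⟩
      dsimp only
      rw [hL _ hmem, hinv]
      ring

end Reparametrization

theorem isGreatest_conj_of_density {f F G L H Ginv : ℝ → ℝ} {mbar lam alpha : ℝ}
    (hf : Continuous f) (hf_nonneg : ∀ p, 0 ≤ f p)
    (hf_int : ∫ p in Ioi (0 : ℝ), f p = 1)
    (hmean_int : IntegrableOn (fun p => p * f p) (Ioi 0))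
    (hmbar : mbar = ∫ p in Ioi (0 : ℝ), p * f p)
    (hF : ∀ b, F b = ∫ p in (0 : ℝ)..b, f p) (hG : ∀ b, G b = ∫ p in (0 : ℝ)..b, p * f p)
    (hlam : 0 < lam) (halpha : 0 ≤ alpha) (hGbij : BijOn G (Ici 0) (Ico 0 mbar))
    (hGinv : ∀ a ∈ Ico (0 : ℝ) mbar, Ginv a ∈ Ici (0 : ℝ) ∧ G (Ginv a) = a)
    (hL : ∀ a ∈ Ico (0 : ℝ) (lam * mbar), L a = -(lam * alpha) * F (Ginv (a / lam)))
    (hLend : L (lam * mbar) = -(lam * alpha))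
    (hHneg : ∀ x < (0 : ℝ), H x = -(lam * x) * ∫ p in (0 : ℝ)..(-alpha / x), F p)
    (hHpos : ∀ x : ℝ, 0 ≤ x → H x = lam * (alpha + x * mbar)) (x : ℝ) :
    IsGreatest ((fun a => x * a - L a) '' Icc 0 (lam * mbar)) (H x) := by
  rw [image_conj_eq_image_profile hlam hGbij hGinv hL hLend]
  have hscale := monotone_mul_left_of_nonneg hlam.le
  rcases le_or_gt 0 x with hx | hx
  · rw [hHpos x hx, add_comm alpha]
    exact hscale.map_isGreatest
      (isGreatest_profile_of_nonneg hf hf_nonneg hf_int hmean_int hmbar hF hG hx halpha)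
  · have hH : H x = lam * (x * G (-alpha / x) + alpha * F (-alpha / x)) := by
      rw [hHneg x hx, intervalIntegral_cdf_eq hf hF hG]
      field_simp [hx.ne]
      ring
    rw [hH]
    exact hscale.map_isGreatest
      (isGreatest_profile_of_neg hf hf_nonneg hf_int hmean_int hmbar hF hG hx halpha)

section InfimalConvolution

variable {ι : Type*} [Fintype ι]

lemma exists_sum_eq_of_mem_Icc_sum {c : ι → ℝ} (hc : ∀ i, 0 ≤ c i) {A : ℝ}
    (hA : A ∈ Icc 0 (∑ i, c i)) : ∃ a : ι → ℝ, (∀ i, a i ∈ Icc 0 (c i)) ∧ ∑ i, a i = A := by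
  set T := ∑ i, c i
  have hAT : 0 ≤ A / T ∧ A / T ≤ 1 :=
    ⟨div_nonneg hA.1 (hA.1.trans hA.2), div_le_one_of_le₀ hA.2 (hA.1.trans hA.2)⟩
  refine ⟨fun i => A / T * c i,
    fun i => ⟨mul_nonneg hAT.1 (hc i), mul_le_of_le_one_left (hc i) hAT.2⟩, ?_⟩
  rw [← Finset.mul_sum]
  rcases eq_or_ne T 0 with hT | hT
  · have hA0 : A = 0 := le_antisymm (hT ▸ hA.2) hA.1
    simp [hA0]
  · exact div_mul_cancel₀ A hT

/-- The paper's `L(𝔞)`. -/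
noncomputable def boxInfConv (L : ι → ℝ → ℝ) (c : ι → ℝ) (A : ℝ) : ℝ :=
  sInf {v | ∃ a : ι → ℝ, (∀ i, a i ∈ Icc 0 (c i)) ∧ ∑ i, a i = A ∧ v = ∑ i, L i (a i)}

theorem isGreatest_conj_boxInfConv {L : ι → ℝ → ℝ} {c h : ι → ℝ} {x : ℝ}
    (hmax : ∀ i, IsGreatest ((fun a => x * a - L i a) '' Icc 0 (c i)) (h i)) :
    IsGreatest ((fun A => x * A - boxInfConv L c A) '' Icc 0 (∑ i, c i)) (∑ i, h i) := by
  have hc : ∀ i, 0 ≤ c i := fun i =>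
    let ⟨_, ha, _⟩ := (hmax i).1
    ha.1.trans ha.2
  choose a' ha' hval using fun i => (hmax i).1
  have hlower : ∀ A v, (∃ a : ι → ℝ, (∀ i, a i ∈ Icc 0 (c i)) ∧ ∑ i, a i = A ∧
      v = ∑ i, L i (a i)) → x * A - ∑ i, h i ≤ v := by
    rintro _ _ ⟨a, ha, rfl, rfl⟩
    have hi : ∀ i, x * a i - L i (a i) ≤ h i := fun i => (hmax i).2 ⟨a i, ha i, rfl⟩
    have := Finset.sum_le_sum fun i (_ : i ∈ Finset.univ) => hi i
    rw [Finset.sum_sub_distrib, ← Finset.mul_sum] at this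
    linarith
  have hle : ∀ A ∈ Icc 0 (∑ i, c i), x * A - boxInfConv L c A ≤ ∑ i, h i := by
    intro A hA
    obtain ⟨a, ha, hsum⟩ := exists_sum_eq_of_mem_Icc_sum hc hA
    have : x * A - ∑ i, h i ≤ boxInfConv L c A := le_csInf ⟨_, a, ha, hsum, rfl⟩ (hlower A)
    linarith
  have hsum : ∑ i, h i = x * ∑ i, a' i - ∑ i, L i (a' i) := by
    rw [Finset.mul_sum, ← Finset.sum_sub_distrib]
    exact Finset.sum_congr rfl fun i _ => (hval i).symm
  have hA' : ∑ i, a' i ∈ Icc 0 (∑ i, c i) :=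
    ⟨Finset.sum_nonneg fun i _ => (ha' i).1, Finset.sum_le_sum fun i _ => (ha' i).2⟩
  refine ⟨⟨_, hA', le_antisymm (hle _ hA') ?_⟩, ?_⟩
  · have : boxInfConv L c (∑ i, a' i) ≤ ∑ i, L i (a' i) :=
      csInf_le ⟨_, hlower _⟩ ⟨a', ha', rfl, rfl⟩
    change ∑ i, h i ≤ x * ∑ i, a' i - boxInfConv L c (∑ i, a' i)
    linarith
  · rintro _ ⟨A, hA, rfl⟩
    exact hle A hA

end InfimalConvolution

theorem stmt_16_general (J : ℕ)
    (f F G L H Ginv : Fin J → ℝ → ℝ) (mbar lam alpha : Fin J → ℝ)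
    (hf_cont : ∀ j, Continuous (f j))
    (hf_nonpos : ∀ j, ∀ p ≤ (0 : ℝ), f j p = 0)
    (hf_pos : ∀ j, ∀ p : ℝ, 0 < p → 0 < f j p)
    (hf_int : ∀ j, (∫ p in Set.Ioi (0 : ℝ), f j p) = 1)
    (hmean_int : ∀ j, MeasureTheory.IntegrableOn (fun p : ℝ => p * f j p) (Set.Ioi 0))
    (hmbar : ∀ j, mbar j = ∫ p in Set.Ioi (0 : ℝ), p * f j p)
    (hF : ∀ j, ∀ b : ℝ, F j b = ∫ p in (0 : ℝ)..b, f j p)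
    (hG : ∀ j, ∀ b : ℝ, G j b = ∫ p in (0 : ℝ)..b, p * f j p)
    (hlam : ∀ j, 0 < lam j) (halpha : ∀ j, 0 < alpha j)
    (hGbij : ∀ j, Set.BijOn (G j) (Set.Ici 0) (Set.Ico 0 (mbar j)))
    (hGinv : ∀ j, ∀ a ∈ Set.Ico (0 : ℝ) (mbar j),
      Ginv j a ∈ Set.Ici (0 : ℝ) ∧ G j (Ginv j a) = a)
    (hL : ∀ j, ∀ a ∈ Set.Ico (0 : ℝ) (lam j * mbar j),
      L j a = -(lam j * alpha j) * F j (Ginv j (a / lam j)))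
    (hLend : ∀ j, L j (lam j * mbar j) = -(lam j * alpha j))
    (hHneg : ∀ j, ∀ x < (0 : ℝ),
      H j x = -(lam j * x) * ∫ p in (0 : ℝ)..(-(alpha j) / x), F j p)
    (hHpos : ∀ j, ∀ x : ℝ, 0 ≤ x → H j x = lam j * (alpha j + x * mbar j))
    (x : ℝ) :
    sSup ((fun A : ℝ => x * A -
        sInf {v : ℝ | ∃ a : Fin J → ℝ,
          (∀ j, a j ∈ Set.Icc (0 : ℝ) (lam j * mbar j)) ∧
          (∑ j, a j) = A ∧ v = ∑ j, L j (a j)})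
        '' Set.Icc 0 (∑ j, lam j * mbar j))
      = ∑ j, H j x := by
  have hf_nonneg : ∀ j p, 0 ≤ f j p := fun j p =>
    (le_or_gt p 0).elim (fun hp => (hf_nonpos j p hp).ge) fun hp => (hf_pos j p hp).le
  refine (isGreatest_conj_boxInfConv fun j => ?_).csSup_eq
  exact isGreatest_conj_of_density (hf_cont j) (hf_nonneg j) (hf_int j) (hmean_int j) (hmbar j)
    (hF j) (hG j) (hlam j) (halpha j).le (hGbij j) (hGinv j) (hL j) (hLend j) (hHneg j) (hHpos j) x

/-- (Conjugate of the infimal convolution.) For every `x ∈ ℝ`,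
`sup_{𝔞 ∈ [0, Σⱼ λʲ m̄ʲ]} (x 𝔞 - L(𝔞)) = Σⱼ Hʲ(x)`, where
`L(𝔞) = inf { Σⱼ Lʲ(aʲ) : aʲ ∈ [0, λʲ m̄ʲ], Σⱼ aʲ = 𝔞 }`. -/
theorem stmt_16 (J : ℕ) (hJ : 1 < J)
    (f F G L H Ginv : Fin J → ℝ → ℝ) (mbar lam alpha : Fin J → ℝ)
    (hf_cont : ∀ j, Continuous (f j))
    (hf_nonpos : ∀ j, ∀ p ≤ (0 : ℝ), f j p = 0)
    (hf_pos : ∀ j, ∀ p : ℝ, 0 < p → 0 < f j p)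
    (hf_int : ∀ j, (∫ p in Set.Ioi (0 : ℝ), f j p) = 1)
    (hf_tail : ∀ j, Filter.Tendsto (fun p : ℝ => p ^ 3 * f j p) Filter.atTop (nhds 0))
    (hmean_int : ∀ j, MeasureTheory.IntegrableOn (fun p : ℝ => p * f j p) (Set.Ioi 0))
    (hmbar : ∀ j, mbar j = ∫ p in Set.Ioi (0 : ℝ), p * f j p)
    (hF : ∀ j, ∀ b : ℝ, F j b = ∫ p in (0 : ℝ)..b, f j p)
    (hG : ∀ j, ∀ b : ℝ, G j b = ∫ p in (0 : ℝ)..b, p * f j p)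
    (hlam : ∀ j, 0 < lam j) (halpha : ∀ j, 0 < alpha j)
    (hGbij : ∀ j, Set.BijOn (G j) (Set.Ici 0) (Set.Ico 0 (mbar j)))
    (hGinv : ∀ j, ∀ a ∈ Set.Ico (0 : ℝ) (mbar j),
      Ginv j a ∈ Set.Ici (0 : ℝ) ∧ G j (Ginv j a) = a)
    (hL : ∀ j, ∀ a ∈ Set.Ico (0 : ℝ) (lam j * mbar j),
      L j a = -(lam j * alpha j) * F j (Ginv j (a / lam j)))
    (hLend : ∀ j, L j (lam j * mbar j) = -(lam j * alpha j))
    (hHneg : ∀ j, ∀ x < (0 : ℝ),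
      H j x = -(lam j * x) * ∫ p in (0 : ℝ)..(-(alpha j) / x), F j p)
    (hHpos : ∀ j, ∀ x : ℝ, 0 ≤ x → H j x = lam j * (alpha j + x * mbar j))
    (x : ℝ) :
    sSup ((fun A : ℝ => x * A -
        sInf {v : ℝ | ∃ a : Fin J → ℝ,
          (∀ j, a j ∈ Set.Icc (0 : ℝ) (lam j * mbar j)) ∧
          (∑ j, a j) = A ∧ v = ∑ j, L j (a j)})
        '' Set.Icc 0 (∑ j, lam j * mbar j))
      = ∑ j, H j x :=
  stmt_16_general J f F G L H Ginv mbar lam alpha hf_cont hf_nonpos hf_pos hf_int hmean_int hmbar hF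
    hG hlam halpha hGbij hGinv hL hLend hHneg hHpos x
end

section
/- (Theorem 2, optimal bids.) Let K > 0, 0 ≤ t < T and S < (T-t) Σ_{j=1}^J λʲ m̄ʲ, and set H := Σ_{j=1}^J Hʲ. Then there exists a unique x* < 0 with S = (T-t) H'(x*) + x*/(2K); for every j, the unique maximizer over b ∈ [0,∞) of b ↦ ∫₀^b fʲ(p)(αʲ + x* p) dp is b^{j*} = -αʲ/x*; consequently b^{j*}/αʲ = b^{j'*}/α^{j'} for all j, j' ∈ {1,…,J}. -/
open MeasureTheory Filter Set

/-- (Theorem 2, optimal bids.) Let `K > 0`, `0 ≤ t < T` and `S < (T-t) Σⱼ λʲ m̄ʲ`, and set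
`H := Σⱼ Hʲ`. Then there is a unique `x* < 0` with `S = (T-t)H'(x*) + x*/(2K)`; for every
`j`, the unique maximizer over `b ∈ [0,∞)` of `b ↦ ∫₀^b fʲ(p)(αʲ + x* p) dp` is
`b^{j*} = -αʲ/x*`; consequently `b^{j*}/αʲ` is the same for all `j`. -/
theorem stmt_18 (J : ℕ) (hJ : 1 < J)
    (f F G H H' : Fin J → ℝ → ℝ) (mbar lam alpha : Fin J → ℝ)
    (hf_cont : ∀ j, Continuous (f j))
    (hf_nonpos : ∀ j, ∀ p ≤ (0 : ℝ), f j p = 0)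
    (hf_pos : ∀ j, ∀ p : ℝ, 0 < p → 0 < f j p)
    (hf_int : ∀ j, (∫ p in Set.Ioi (0 : ℝ), f j p) = 1)
    (hf_tail : ∀ j, Filter.Tendsto (fun p : ℝ => p ^ 3 * f j p) Filter.atTop (nhds 0))
    (hmean_int : ∀ j, MeasureTheory.IntegrableOn (fun p : ℝ => p * f j p) (Set.Ioi 0))
    (hmbar : ∀ j, mbar j = ∫ p in Set.Ioi (0 : ℝ), p * f j p)
    (hF : ∀ j, ∀ b : ℝ, F j b = ∫ p in (0 : ℝ)..b, f j p)
    (hG : ∀ j, ∀ b : ℝ, G j b = ∫ p in (0 : ℝ)..b, p * f j p)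
    (hlam : ∀ j, 0 < lam j) (halpha : ∀ j, 0 < alpha j)
    (hHneg : ∀ j, ∀ x < (0 : ℝ),
      H j x = -(lam j * x) * ∫ p in (0 : ℝ)..(-(alpha j) / x), F j p)
    (hHpos : ∀ j, ∀ x : ℝ, 0 ≤ x → H j x = lam j * (alpha j + x * mbar j))
    (hH'deriv : ∀ j, ∀ x : ℝ, HasDerivAt (H j) (H' j x) x)
    (hH'neg : ∀ j, ∀ x < (0 : ℝ), H' j x = lam j * G j (-(alpha j) / x))
    (hH'pos : ∀ j, ∀ x : ℝ, 0 ≤ x → H' j x = lam j * mbar j)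
    (K t T S : ℝ) (hK : 0 < K) (ht : 0 ≤ t) (htT : t < T)
    (hS : S < (T - t) * ∑ j, lam j * mbar j) :
    ∃ xs : ℝ, xs < 0 ∧
      S = (T - t) * (∑ j, H' j xs) + xs / (2 * K) ∧
      (∀ y : ℝ, y < 0 → S = (T - t) * (∑ j, H' j y) + y / (2 * K) → y = xs) ∧
      (∀ j, (∀ b ∈ Set.Ici (0 : ℝ),
          (∫ p in (0 : ℝ)..b, f j p * (alpha j + xs * p))
            ≤ ∫ p in (0 : ℝ)..(-(alpha j) / xs), f j p * (alpha j + xs * p)) ∧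
        (∀ b ∈ Set.Ici (0 : ℝ),
          (∫ p in (0 : ℝ)..b, f j p * (alpha j + xs * p))
              = (∫ p in (0 : ℝ)..(-(alpha j) / xs), f j p * (alpha j + xs * p))
            → b = -(alpha j) / xs)) ∧
      (∀ j j' : Fin J,
        (-(alpha j) / xs) / alpha j = (-(alpha j') / xs) / alpha j') := by
  have hTt : (0:ℝ) < T - t := sub_pos.mpr htT
  have hK2 : (0:ℝ) < 2 * K := by linarith
  -- basics about p * f
  have hpf_cont : ∀ j, Continuous (fun p : ℝ => p * f j p) :=
    fun j => continuous_id.mul (hf_cont j)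
  have hpf_nonneg : ∀ j, ∀ p : ℝ, 0 ≤ p * f j p := by
    intro j p
    rcases le_or_gt p 0 with h | h
    · simp [hf_nonpos j p h]
    · exact mul_nonneg h.le (hf_pos j p h).le
  have hpf_ii : ∀ j, ∀ a b : ℝ, IntervalIntegrable (fun p : ℝ => p * f j p) volume a b :=
    fun j a b => (hpf_cont j).intervalIntegrable a b
  have hGmono : ∀ j, Monotone (G j) := by
    intro j a b hab
    have hadd := intervalIntegral.integral_add_adjacent_intervals (hpf_ii j 0 a) (hpf_ii j a b)
    have hnn : 0 ≤ ∫ p in a..b, p * f j p :=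
      intervalIntegral.integral_nonneg hab (fun p _ => hpf_nonneg j p)
    rw [hG j a, hG j b]
    linarith
  have hGcont : ∀ j, Continuous (G j) := by
    intro j
    have h := intervalIntegral.continuous_primitive (fun a b => hpf_ii j a b) 0
    exact h.congr (fun b => (hG j b).symm)
  have hGle : ∀ j, ∀ b : ℝ, 0 < b → G j b ≤ mbar j := by
    intro j b hb
    rw [hG j b, hmbar j, intervalIntegral.integral_of_le hb.le]
    apply setIntegral_mono_set (hmean_int j)
    · exact Filter.Eventually.of_forall (fun p => hpf_nonneg j p)
    · exact HasSubset.Subset.eventuallyLE Ioc_subset_Ioi_self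
  have hGtend : ∀ j, Tendsto (G j) atTop (nhds (mbar j)) := by
    intro j
    have h := MeasureTheory.intervalIntegral_tendsto_integral_Ioi 0 (hmean_int j) tendsto_id
    rw [hmbar j]
    exact h.congr (fun b => (hG j b).symm)
  have hxpos : ∀ (j : Fin J), ∀ x : ℝ, x < 0 → 0 < -(alpha j) / x :=
    fun j x hx => div_pos_of_neg_of_neg (neg_lt_zero.mpr (halpha j)) hx
  have hbmono : ∀ (j : Fin J), ∀ x y : ℝ, x < y → y < 0 → -(alpha j) / x ≤ -(alpha j) / y := by
    intro j x y hxy hy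
    have hx : x < 0 := hxy.trans hy
    have key : ∀ a z : ℝ, -a / z = a / (-z) := by
      intro a z; rw [neg_div, div_neg]
    rw [key, key]
    exact div_le_div_of_nonneg_left (halpha j).le (neg_pos.mpr hy) (by linarith)
  set L : ℝ := (T - t) * ∑ j, lam j * mbar j with hL
  set φ : ℝ → ℝ := fun x => (T - t) * (∑ j, H' j x) + x / (2 * K) with hφ
  have hφneg : ∀ x : ℝ, x < 0 →
      φ x = (T - t) * (∑ j, lam j * G j (-(alpha j) / x)) + x / (2 * K) := by
    intro x hx
    simp only [hφ]
    have hsum : (∑ j, H' j x) = ∑ j, lam j * G j (-(alpha j) / x) :=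
      Finset.sum_congr rfl (fun j _ => hH'neg j x hx)
    rw [hsum]
  have hφmono : StrictMonoOn φ (Iio (0:ℝ)) := by
    intro x hx y hy hxy
    rw [hφneg x hx, hφneg y hy]
    have hsum : (∑ j, lam j * G j (-(alpha j) / x)) ≤ ∑ j, lam j * G j (-(alpha j) / y) := by
      apply Finset.sum_le_sum
      intro j _
      exact mul_le_mul_of_nonneg_left (hGmono j (hbmono j x y hxy hy)) (hlam j).le
    have h1 : (T - t) * (∑ j, lam j * G j (-(alpha j) / x))
        ≤ (T - t) * (∑ j, lam j * G j (-(alpha j) / y)) :=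
      mul_le_mul_of_nonneg_left hsum hTt.le
    have h2 : x / (2 * K) < y / (2 * K) := by
      apply div_lt_div_of_pos_right hxy hK2
    linarith
  -- limit of φ at 0⁻
  have hneg : Tendsto (fun x : ℝ => -x) (nhdsWithin 0 (Iio 0)) (nhdsWithin 0 (Ioi 0)) := by
    rw [tendsto_nhdsWithin_iff]
    constructor
    · simpa using (continuous_neg.tendsto (0:ℝ)).mono_left nhdsWithin_le_nhds
    · filter_upwards [self_mem_nhdsWithin] with x hx
      simpa using hx
  have hbtend : ∀ j : Fin J,
      Tendsto (fun x : ℝ => -(alpha j) / x) (nhdsWithin 0 (Iio 0)) atTop := by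
    intro j
    have h1 : Tendsto (fun x : ℝ => (-x)⁻¹) (nhdsWithin 0 (Iio 0)) atTop :=
      tendsto_inv_nhdsGT_zero.comp hneg
    have h2 := h1.const_mul_atTop (halpha j)
    refine h2.congr (fun x => ?_)
    rw [← div_eq_mul_inv, div_neg, neg_div]
  have hterm : ∀ j : Fin J, Tendsto (fun x : ℝ => lam j * G j (-(alpha j) / x))
      (nhdsWithin 0 (Iio 0)) (nhds (lam j * mbar j)) :=
    fun j => ((hGtend j).comp (hbtend j)).const_mul (lam j)
  have hsumtend : Tendsto (fun x : ℝ => ∑ j, lam j * G j (-(alpha j) / x))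
      (nhdsWithin 0 (Iio 0)) (nhds (∑ j, lam j * mbar j)) :=
    tendsto_finset_sum _ (fun j _ => hterm j)
  have hlin : Tendsto (fun x : ℝ => x / (2 * K)) (nhdsWithin (0:ℝ) (Iio 0)) (nhds 0) := by
    have h := (continuous_id.div_const (2*K)).tendsto (0:ℝ)
    simpa using h.mono_left nhdsWithin_le_nhds
  have hφtend : Tendsto φ (nhdsWithin 0 (Iio 0)) (nhds L) := by
    have h := (hsumtend.const_mul (T - t)).add hlin
    have hEq : ∀ᶠ x in nhdsWithin (0:ℝ) (Iio 0),
        ((T - t) * (∑ j, lam j * G j (-(alpha j) / x)) + x / (2 * K)) = φ x := by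
      filter_upwards [self_mem_nhdsWithin] with x hx
      exact (hφneg x hx).symm
    have h2 := h.congr' hEq
    simpa [hL] using h2
  -- existence of x₁ with φ x₁ > S
  have hev : ∀ᶠ x in nhdsWithin (0:ℝ) (Iio 0), S < φ x :=
    hφtend.eventually (eventually_gt_nhds hS)
  obtain ⟨x₁, hSx₁, hx₁0⟩ := (hev.and self_mem_nhdsWithin).exists
  -- x₀ with φ x₀ ≤ S
  set x₀ : ℝ := min x₁ (2 * K * (S - L)) with hx₀def
  have hx₀1 : x₀ ≤ x₁ := min_le_left _ _
  have hx₀0 : x₀ < 0 := lt_of_le_of_lt hx₀1 hx₁0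
  have hφx₀ : φ x₀ ≤ S := by
    rw [hφneg x₀ hx₀0]
    have hsum : (∑ j, lam j * G j (-(alpha j) / x₀)) ≤ ∑ j, lam j * mbar j := by
      apply Finset.sum_le_sum
      intro j _
      exact mul_le_mul_of_nonneg_left (hGle j _ (hxpos j x₀ hx₀0)) (hlam j).le
    have h1 : (T - t) * (∑ j, lam j * G j (-(alpha j) / x₀)) ≤ L := by
      rw [hL]; exact mul_le_mul_of_nonneg_left hsum hTt.le
    have h2 : x₀ / (2 * K) ≤ S - L := by
      have h3 : x₀ ≤ 2 * K * (S - L) := min_le_right _ _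
      rw [div_le_iff₀ hK2]
      linarith
    linarith
  -- continuity of φ on [x₀, x₁]
  have hφcont : ContinuousOn φ (Icc x₀ x₁) := by
    have hsub : Icc x₀ x₁ ⊆ Iio (0:ℝ) := fun z hz => lt_of_le_of_lt hz.2 hx₁0
    have hc : ContinuousOn
        (fun x : ℝ => (T - t) * (∑ j, lam j * G j (-(alpha j) / x)) + x / (2 * K)) (Iio 0) := by
      apply ContinuousOn.add
      · apply ContinuousOn.mul continuousOn_const
        apply continuousOn_finset_sum
        intro j _
        apply ContinuousOn.mul continuousOn_const
        exact (hGcont j).comp_continuousOn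
          (continuousOn_const.div continuousOn_id (fun x hx => ne_of_lt hx))
      · exact continuousOn_id.div continuousOn_const (fun x _ => ne_of_gt hK2)
    exact (hc.congr (fun x hx => hφneg x hx)).mono hsub
  have hmemS : S ∈ Icc (φ x₀) (φ x₁) := ⟨hφx₀, hSx₁.le⟩
  obtain ⟨xs, hxsmem, hφxs⟩ := intermediate_value_Icc hx₀1 hφcont hmemS
  have hxs0 : xs < 0 := lt_of_le_of_lt hxsmem.2 hx₁0
  have hxsne : xs ≠ 0 := ne_of_lt hxs0
  -- maximizer part
  have hmax : ∀ j : Fin J, ∀ b ∈ Ici (0:ℝ), b ≠ -(alpha j) / xs →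
      (∫ p in (0:ℝ)..b, f j p * (alpha j + xs * p))
        < ∫ p in (0:ℝ)..(-(alpha j) / xs), f j p * (alpha j + xs * p) := by
    intro j b hb hne
    set bj : ℝ := -(alpha j) / xs with hbjdef
    have hbj : 0 < bj := hxpos j xs hxs0
    have hcont : Continuous (fun p : ℝ => f j p * (alpha j + xs * p)) :=
      (hf_cont j).mul (continuous_const.add (continuous_const.mul continuous_id))
    have hii : ∀ a c : ℝ, IntervalIntegrable (fun p : ℝ => f j p * (alpha j + xs * p)) volume a c :=
      fun a c => hcont.intervalIntegrable a c
    have hxsbj : xs * bj = -(alpha j) := by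
      rw [hbjdef]; field_simp
    rcases lt_or_gt_of_ne hne with hlt | hgt
    · have hadd := intervalIntegral.integral_add_adjacent_intervals (hii 0 b) (hii b bj)
      have hpos : 0 < ∫ p in b..bj, f j p * (alpha j + xs * p) := by
        apply intervalIntegral.intervalIntegral_pos_of_pos_on (hii b bj) _ hlt
        intro p hp
        have hp0 : 0 < p := lt_of_le_of_lt hb hp.1
        have hprod : 0 < (-xs) * (bj - p) :=
          mul_pos (neg_pos.mpr hxs0) (sub_pos.mpr hp.2)
        have h2 : 0 < alpha j + xs * p := by nlinarith [hxsbj]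
        exact mul_pos (hf_pos j p hp0) h2
      linarith
    · have hadd := intervalIntegral.integral_add_adjacent_intervals (hii 0 bj) (hii bj b)
      have hneg2 : 0 < ∫ p in bj..b, -(f j p * (alpha j + xs * p)) := by
        apply intervalIntegral.intervalIntegral_pos_of_pos_on ((hii bj b).neg) _ hgt
        intro p hp
        have hp0 : 0 < p := hbj.trans hp.1
        have hprod : 0 < (-xs) * (p - bj) :=
          mul_pos (neg_pos.mpr hxs0) (sub_pos.mpr hp.1)
        have h2 : alpha j + xs * p < 0 := by nlinarith [hxsbj]
        have h3 := mul_neg_of_pos_of_neg (hf_pos j p hp0) h2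
        show 0 < -(f j p * (alpha j + xs * p))
        linarith
      rw [intervalIntegral.integral_neg] at hneg2
      linarith
  have hratio : ∀ i : Fin J, (-(alpha i) / xs) / alpha i = -(1 / xs) := by
    intro i
    have hai : alpha i ≠ 0 := (halpha i).ne'
    field_simp
  refine ⟨xs, hxs0, ?_, ?_, ?_, ?_⟩
  · exact hφxs.symm
  · intro y hy hSy
    apply hφmono.injOn hy hxs0
    rw [hφxs]
    exact hSy.symm
  · intro j
    constructor
    · intro b hb
      rcases eq_or_ne b (-(alpha j) / xs) with h | h
      · rw [h]
      · exact (hmax j b hb h).le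
    · intro b hb heq
      by_contra h
      exact absurd heq (ne_of_lt (hmax j b hb h))
  · intro j j'
    rw [hratio j, hratio j']
end
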